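/- arXiv:2309.03629 — 3 statements merged into one kernel-verified Lean document; each statement's English description precedes it below -/
import Mathlib

section
/- Let ℓ ≥ 1 and let x, y⁽⁰⁾, …, y⁽ℓ⁻¹⁾ : [0,1] → ℝ be continuous functions. Set xⁱ_{st} = (x_t − x_s)ⁱ/i!, r⁽ℓ⁻¹⁾_{st} = y⁽ℓ⁻¹⁾_t − y⁽ℓ⁻¹⁾_s, and r⁽ᵏ⁾_{st} = y⁽ᵏ⁾_t − y⁽ᵏ⁾_s − Σ_{i=1}^{ℓ−1−k} y⁽ᵏ⁺ⁱ⁾_s xⁱ_{st} for 0 ≤ k ≤ ℓ−2. Then for all 0 ≤ s ≤ u ≤ t ≤ 1 one has the identity r⁽⁰⁾_{st} − r⁽⁰⁾_{su} − r⁽⁰⁾_{ut} = Σ_{i=1}^{ℓ−1} r⁽ⁱ⁾_{su} xⁱ_{ut}. -/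
open MeasureTheory ProbabilityTheory Real Filter
open scoped BigOperators NNReal ENNReal Topology

noncomputable section

namespace PV

/-- Covariance function of fractional Brownian motion with Hurst parameter `H`. -/
def fbmCov (H s t : ℝ) : ℝ :=
  (1 / 2) * (s ^ (2 * H) + t ^ (2 * H) - |t - s| ^ (2 * H))

/-- `X` is a fractional Brownian motion with Hurst parameter `H` on `[0,1]`:
a continuous centered Gaussian process whose finite-dimensional laws are centered
Gaussian with the fBm covariance. -/
structure IsFBM {Ω : Type*} [MeasurableSpace Ω] (P : Measure Ω) (H : ℝ)
    (X : ℝ → Ω → ℝ) : Prop where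
  meas : ∀ t : ℝ, Measurable (X t)
  cont : ∀ ω, ContinuousOn (fun t => X t ω) (Set.Icc 0 1)
  gaussian : ∀ (m : ℕ) (ts : Fin m → ℝ) (c : Fin m → ℝ),
    (∀ i, ts i ∈ Set.Icc (0 : ℝ) 1) →
    P.map (fun ω => ∑ i, c i * X (ts i) ω) =
      gaussianReal 0 (Real.toNNReal (∑ i, ∑ j, c i * c j * fbmCov H (ts i) (ts j)))

/-- `xⁱ_{st} = (x_t - x_s)^i / i!`. -/
def xpow {Ω : Type*} (x : ℝ → Ω → ℝ) (i : ℕ) (s t : ℝ) (ω : Ω) : ℝ :=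
  (x t ω - x s ω) ^ i / (Nat.factorial i : ℝ)

/-- Remainder processes of a tuple `y` controlled by `x` with `ℓ` levels. -/
def rem {Ω : Type*} (x : ℝ → Ω → ℝ) (ℓ : ℕ) (y : ℕ → ℝ → Ω → ℝ) (k : ℕ)
    (s t : ℝ) (ω : Ω) : ℝ :=
  y k t ω - y k s ω - ∑ i ∈ Finset.Icc 1 (ℓ - 1 - k), y (k + i) s ω * xpow x i s t ω

/-- `(y⁽⁰⁾, …, y⁽ℓ⁻¹⁾)` is a rough path controlled by `(x, ℓ, α)` almost surely. -/
structure ControlledAS {Ω : Type*} [MeasurableSpace Ω] (P : Measure Ω)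
    (x : ℝ → Ω → ℝ) (ℓ : ℕ) (α : ℝ) (y : ℕ → ℝ → Ω → ℝ) : Prop where
  meas : ∀ k < ℓ, ∀ t : ℝ, Measurable (fun ω => y k t ω)
  cont : ∀ k < ℓ, ∀ ω, ContinuousOn (fun t => y k t ω) (Set.Icc 0 1)
  init : ∀ k < ℓ, ∀ ω, y k 0 ω = 0
  bound : ∀ ε > (0 : ℝ), ∃ G : Ω → ℝ, ∀ᵐ ω ∂P, ∀ k < ℓ, ∀ s t : ℝ,
    0 ≤ s → s ≤ t → t ≤ 1 →
    |rem x ℓ y k s t ω| ≤ G ω * (t - s) ^ (((ℓ : ℝ) - k) * α - ε)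

/-- `(y⁽⁰⁾, …, y⁽ℓ⁻¹⁾)` is a rough path controlled by `(x, ℓ, α)` in `L_p`,
with control constant `M`. -/
structure ControlledLp {Ω : Type*} [MeasurableSpace Ω] (P : Measure Ω)
    (x : ℝ → Ω → ℝ) (ℓ : ℕ) (α : ℝ) (p : ℝ≥0∞) (y : ℕ → ℝ → Ω → ℝ) (M : ℝ) : Prop where
  meas : ∀ k < ℓ, ∀ t : ℝ, Measurable (fun ω => y k t ω)
  cont : ∀ k < ℓ, ∀ ω, ContinuousOn (fun t => y k t ω) (Set.Icc 0 1)
  init : ∀ k < ℓ, ∀ ω, y k 0 ω = 0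
  bound : ∀ k < ℓ, ∀ s t : ℝ, 0 ≤ s → s ≤ t → t ≤ 1 →
    eLpNorm (fun ω => rem x ℓ y k s t ω) p P ≤
      ENNReal.ofReal (M * (t - s) ^ (((ℓ : ℝ) - k) * α))

/-- Discrete integral `J_s^t(f, h)` of a one-parameter process `f` against `h`,
along the partition `π 0 < π 1 < ⋯ < π n`. -/
def J1 {Ω : Type*} (n : ℕ) (T : ℕ → ℝ) (s t : ℝ) (f : ℝ → Ω → ℝ)
    (h : ℝ → ℝ → Ω → ℝ) (ω : Ω) : ℝ :=
  ∑ k ∈ Finset.range n,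
    if s ≤ T k ∧ T k < t then f (T k) ω * h (T k) (T (k + 1)) ω else 0

/-- Discrete integral `J_s^t(f, h)` of a two-parameter process `f` against `h`. -/
def J2 {Ω : Type*} (n : ℕ) (T : ℕ → ℝ) (s t : ℝ) (f : ℝ → ℝ → Ω → ℝ)
    (h : ℝ → ℝ → Ω → ℝ) (ω : Ω) : ℝ :=
  ∑ k ∈ Finset.range n,
    if s ≤ T k ∧ T k < t then f s (T k) ω * h (T k) (T (k + 1)) ω else 0

/-- The uniform partition `t_k = k / n` of `[0,1]`. -/
def unif (n k : ℕ) : ℝ := (k : ℝ) / n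

/-- `c_p = E|N|^p` for a standard normal `N`. -/
def cconst (p : ℝ) : ℝ := 2 ^ (p / 2) * Real.Gamma ((p + 1) / 2) / Real.sqrt π

/-- Covariance `ρ(k)` of unit increments of fBm. -/
def rho (H : ℝ) (k : ℤ) : ℝ :=
  (1 / 2) * (|(k : ℝ) + 1| ^ (2 * H) - 2 * |(k : ℝ)| ^ (2 * H) + |(k : ℝ) - 1| ^ (2 * H))

/-- The Hermite coefficients `a_{2q}` of `|x|^p - c_p`. -/
def acoef (p : ℝ) (q : ℕ) : ℝ :=
  ∑ r ∈ Finset.range (q + 1),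
    ((-1 : ℝ) ^ r / (2 ^ r * (Nat.factorial r : ℝ) * (Nat.factorial (2 * q - 2 * r) : ℝ))) *
      cconst (((2 * q - 2 * r : ℕ) : ℝ) + p)

/-- `σ² = Σ_{q≥1} (2q)! a_{2q}² Σ_{k∈ℤ} ρ(k)^{2q}`. -/
def sigma2 (H p : ℝ) : ℝ :=
  ∑' q : ℕ, ((Nat.factorial (2 * (q + 1)) : ℝ) * acoef p (q + 1) ^ 2 *
    ∑' k : ℤ, rho H k ^ (2 * (q + 1)))

/-- The sign function. -/
def sgn (x : ℝ) : ℝ := if 0 < x then 1 else if x < 0 then -1 else 0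

/-- Hermite coefficient `a_q = (1/q!) ∫ f H_q dγ` with respect to the standard
Gaussian measure. -/
def hermiteCoeff (f : ℝ → ℝ) (q : ℕ) : ℝ :=
  (Nat.factorial q : ℝ)⁻¹ *
    ∫ v, f v * (Polynomial.aeval v (Polynomial.hermite q)) ∂(gaussianReal 0 1)

/-- `f` has Hermite rank `d`. -/
def HasHermiteRank (f : ℝ → ℝ) (d : ℕ) : Prop :=
  (∀ q < d, hermiteCoeff f q = 0) ∧ hermiteCoeff f d ≠ 0

/-- `h^n_{st} = Σ_{s ≤ t_k < t} ∫_{t_k}^{t_{k+1}} (x_u - x_{t_k}) du` on the uniform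
partition. -/
def hnInt {Ω : Type*} (x : ℝ → Ω → ℝ) (n : ℕ) (s t : ℝ) (ω : Ω) : ℝ :=
  ∑ k ∈ Finset.range n,
    if s ≤ (k : ℝ) / n ∧ (k : ℝ) / n < t then
      ∫ u in ((k : ℝ) / n)..(((k : ℝ) + 1) / n), (x u ω - x ((k : ℝ) / n) ω) else 0

/-- The weighted power-variation sum
`Σ_{0 ≤ t_k < t} y_{t_k} (|n^H (x_{t_{k+1}} - x_{t_k})|^p - c_p)`. -/
def pvarS {Ω : Type*} (x : ℝ → Ω → ℝ) (y : ℕ → ℝ → Ω → ℝ) (H p : ℝ) (n : ℕ)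
    (t : ℝ) (ω : Ω) : ℝ :=
  ∑ k ∈ Finset.range n,
    if (k : ℝ) / n < t then
      y 0 ((k : ℝ) / n) ω *
        (|(n : ℝ) ^ H * (x (((k : ℝ) + 1) / n) ω - x ((k : ℝ) / n) ω)| ^ p - cconst p)
    else 0

end PV

private lemma stmt0_binom (m : ℕ) (a b : ℝ) :
    (a + b) ^ m / (Nat.factorial m : ℝ) =
      ∑ k ∈ Finset.range (m + 1),
        (a ^ k / (Nat.factorial k : ℝ)) * (b ^ (m - k) / (Nat.factorial (m - k) : ℝ)) := by
  rw [add_pow, Finset.sum_div]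
  refine Finset.sum_congr rfl fun k hk => ?_
  have hk' : k ≤ m := Nat.lt_succ_iff.mp (Finset.mem_range.mp hk)
  have h : ((Nat.choose m k : ℝ)) * (Nat.factorial k : ℝ) * (Nat.factorial (m - k) : ℝ)
      = (Nat.factorial m : ℝ) := by
    exact_mod_cast congrArg (Nat.cast : ℕ → ℝ) (Nat.choose_mul_factorial_mul_factorial hk')
  have h1 : (Nat.factorial k : ℝ) ≠ 0 := Nat.cast_ne_zero.mpr (Nat.factorial_ne_zero k)
  have h2 : (Nat.factorial (m - k) : ℝ) ≠ 0 := Nat.cast_ne_zero.mpr (Nat.factorial_ne_zero _)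
  have h3 : (Nat.factorial m : ℝ) ≠ 0 := Nat.cast_ne_zero.mpr (Nat.factorial_ne_zero m)
  field_simp
  linear_combination a ^ k * b ^ (m - k) * h

private lemma stmt0_key (n : ℕ) (a b : ℝ) (c : ℕ → ℝ) :
    ∑ i ∈ Finset.Icc 1 n, c i * ((a + b) ^ i / (Nat.factorial i : ℝ)) =
      ∑ i ∈ Finset.Icc 1 n, c i * (a ^ i / (Nat.factorial i : ℝ)) +
      ∑ i ∈ Finset.Icc 1 n, c i * (b ^ i / (Nat.factorial i : ℝ)) +
      ∑ i ∈ Finset.Icc 1 n, ∑ j ∈ Finset.Icc 1 (n - i),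
        c (i + j) * (a ^ j / (Nat.factorial j : ℝ)) * (b ^ i / (Nat.factorial i : ℝ)) := by
  induction n with
  | zero => simp
  | succ n ih =>
    rw [Finset.sum_Icc_succ_top (by omega), Finset.sum_Icc_succ_top (by omega),
      Finset.sum_Icc_succ_top (by omega), Finset.sum_Icc_succ_top (by omega)]
    have hdd : ∀ i ∈ Finset.Icc 1 n,
        ∑ j ∈ Finset.Icc 1 (n + 1 - i),
          c (i + j) * (a ^ j / (Nat.factorial j : ℝ)) * (b ^ i / (Nat.factorial i : ℝ)) =
        (∑ j ∈ Finset.Icc 1 (n - i),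
          c (i + j) * (a ^ j / (Nat.factorial j : ℝ)) * (b ^ i / (Nat.factorial i : ℝ))) +
        c (n + 1) * (a ^ (n + 1 - i) / (Nat.factorial (n + 1 - i) : ℝ))
          * (b ^ i / (Nat.factorial i : ℝ)) := by
      intro i hi
      have hi' := Finset.mem_Icc.mp hi
      have h1 : n + 1 - i = (n - i) + 1 := by omega
      rw [h1, Finset.sum_Icc_succ_top (by omega)]
      have h2 : i + (n - i + 1) = n + 1 := by omega
      rw [h2]
    rw [Finset.sum_congr rfl hdd, Finset.sum_add_distrib, ih]
    have hnew : c (n + 1) * ((a + b) ^ (n + 1) / (Nat.factorial (n + 1) : ℝ)) =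
        c (n + 1) * (a ^ (n + 1) / (Nat.factorial (n + 1) : ℝ)) +
        c (n + 1) * (b ^ (n + 1) / (Nat.factorial (n + 1) : ℝ)) +
        ∑ i ∈ Finset.Icc 1 n, c (n + 1) * (a ^ (n + 1 - i) / (Nat.factorial (n + 1 - i) : ℝ))
          * (b ^ i / (Nat.factorial i : ℝ)) := by
      have hb := stmt0_binom (n + 1) b a
      rw [add_comm b a] at hb
      rw [Finset.sum_range_succ, Finset.sum_range_succ'] at hb
      have hIcc : ∑ i ∈ Finset.Icc 1 n, c (n + 1) * (a ^ (n + 1 - i) / (Nat.factorial (n + 1 - i) : ℝ))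
          * (b ^ i / (Nat.factorial i : ℝ)) =
          ∑ i ∈ Finset.range n, c (n + 1) * (a ^ (n + 1 - (1 + i)) / (Nat.factorial (n + 1 - (1 + i)) : ℝ))
          * (b ^ (1 + i) / (Nat.factorial (1 + i) : ℝ)) := by
        rw [← Finset.Ico_add_one_right_eq_Icc, Finset.sum_Ico_eq_sum_range]
        simp
      have hs : ∑ k ∈ Finset.range n,
          (b ^ (k + 1) / (Nat.factorial (k + 1) : ℝ)) *
            (a ^ (n + 1 - (k + 1)) / (Nat.factorial (n + 1 - (k + 1)) : ℝ)) =
          ∑ i ∈ Finset.range n, (a ^ (n + 1 - (1 + i)) / (Nat.factorial (n + 1 - (1 + i)) : ℝ))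
          * (b ^ (1 + i) / (Nat.factorial (1 + i) : ℝ)) := by
        refine Finset.sum_congr rfl fun k _ => ?_
        rw [add_comm 1 k]; ring
      rw [hs] at hb
      rw [hIcc]
      simp only [mul_assoc]
      rw [← Finset.mul_sum, hb]
      simp only [Nat.sub_zero, Nat.sub_self, pow_zero, Nat.factorial_zero, Nat.cast_one]
      ring
    rw [hnew]
    have he : Finset.Icc 1 (n + 1 - (n + 1)) = (∅ : Finset ℕ) := by simp
    rw [he, Finset.sum_empty]
    ring

open PV in
/-- Chen-type relation for the remainders of a controlled tuple:
`r⁽⁰⁾_{st} - r⁽⁰⁾_{su} - r⁽⁰⁾_{ut} = Σ_{i=1}^{ℓ-1} r⁽ⁱ⁾_{su} xⁱ_{ut}`. -/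
theorem stmt0 (ℓ : ℕ) (hℓ : 1 ≤ ℓ) (x : ℝ → ℝ) (y : ℕ → ℝ → ℝ)
    (hx : ContinuousOn x (Set.Icc 0 1))
    (hy : ∀ k < ℓ, ContinuousOn (y k) (Set.Icc 0 1))
    (r : ℕ → ℝ → ℝ → ℝ)
    (hr : ∀ k, k < ℓ → ∀ s t : ℝ, r k s t =
      y k t - y k s - ∑ i ∈ Finset.Icc 1 (ℓ - 1 - k),
        y (k + i) s * ((x t - x s) ^ i / (Nat.factorial i : ℝ)))
    (s u t : ℝ) (h0s : 0 ≤ s) (hsu : s ≤ u) (hut : u ≤ t) (ht1 : t ≤ 1) :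
    r 0 s t - r 0 s u - r 0 u t =
      ∑ i ∈ Finset.Icc 1 (ℓ - 1), r i s u * ((x t - x u) ^ i / (Nat.factorial i : ℝ)) := by
  have hR : ∑ i ∈ Finset.Icc 1 (ℓ - 1), r i s u * ((x t - x u) ^ i / (Nat.factorial i : ℝ)) =
      ∑ i ∈ Finset.Icc 1 (ℓ - 1),
        ((y i u - y i s) * ((x t - x u) ^ i / (Nat.factorial i : ℝ)) -
          ∑ j ∈ Finset.Icc 1 (ℓ - 1 - i),
            y (i + j) s * ((x u - x s) ^ j / (Nat.factorial j : ℝ)) *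
              ((x t - x u) ^ i / (Nat.factorial i : ℝ))) := by
    refine Finset.sum_congr rfl fun i hi => ?_
    have hi' := Finset.mem_Icc.mp hi
    rw [hr i (by omega) s u]
    rw [sub_mul, Finset.sum_mul]
  rw [hR, hr 0 (by omega) s t, hr 0 (by omega) s u, hr 0 (by omega) u t]
  simp only [Nat.sub_zero, zero_add]
  have hAB : x t - x s = (x u - x s) + (x t - x u) := by ring
  rw [hAB, stmt0_key (ℓ - 1) (x u - x s) (x t - x u) (fun i => y i s)]
  rw [Finset.sum_sub_distrib]
  simp only [sub_mul, Finset.sum_sub_distrib]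
  ring
end
end

section
/- Let (Ω, ℱ, P) be a probability space, let Y⁽¹⁾_n and Y⁽²⁾_n (n ∈ ℕ) be real random variables on Ω, and let ℱ^Y be the σ-field generated by all Y⁽ⁱ⁾_n, i = 1,2, n ∈ ℕ. Let Y⁽¹⁾ be a real random variable defined on a product extension Ω̄ = Ω × Ω′ such that for every bounded ℱ^Y-measurable Z : Ω → ℝ the pair (Y⁽¹⁾_n, Z) converges in distribution to (Y⁽¹⁾, Z) as n → ∞ (i.e. the laws on ℝ² converge weakly). Suppose Y⁽²⁾_n → Y⁽²⁾ in probability for some ℱ^Y-measurable real random variable Y⁽²⁾. Then for every bounded ℱ^Y-measurable Z : Ω → ℝ, the triple (Y⁽¹⁾_n, Y⁽²⁾_n, Z) converges in distribution to (Y⁽¹⁾, Y⁽²⁾, Z) as n → ∞; in particular (Y⁽¹⁾_n + Y⁽²⁾_n, Z) converges in distribution to (Y⁽¹⁾ + Y⁽²⁾, Z). -/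
open MeasureTheory ProbabilityTheory Real Filter
open scoped BigOperators NNReal ENNReal Topology

noncomputable section

section StableAux
open BoundedContinuousFunction


/-- ε/3 criterion for convergence. -/
lemma aux_tendsto_of_approx (a : ℕ → ℝ) (t : ℝ)
    (h : ∀ ε : ℝ, 0 < ε → ∃ (b : ℕ → ℝ) (u : ℝ), Tendsto b atTop (𝓝 u) ∧
      (∀ᶠ n in atTop, |a n - b n| ≤ ε) ∧ |t - u| ≤ ε) :
    Tendsto a atTop (𝓝 t) := by
  rw [Metric.tendsto_atTop]
  intro ε hε
  obtain ⟨b, u, hb, hab, htu⟩ := h (ε / 4) (by linarith)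
  have hb' : ∀ᶠ n in atTop, |b n - u| < ε / 4 := by
    have := Metric.tendsto_atTop.mp hb (ε / 4) (by linarith)
    obtain ⟨N, hN⟩ := this
    exact eventually_atTop.mpr ⟨N, fun n hn => by simpa [Real.dist_eq] using hN n hn⟩
  obtain ⟨N, hN⟩ := eventually_atTop.mp (hab.and hb')
  refine ⟨N, fun n hn => ?_⟩
  obtain ⟨h1, h2⟩ := hN n hn
  have : |a n - t| ≤ |a n - b n| + |b n - u| + |u - t| := by
    have := abs_sub_le (a n) (b n) (t)
    have := abs_sub_le (b n) u t
    calc |a n - t| ≤ |a n - b n| + |b n - t| := abs_sub_le _ _ _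
      _ ≤ |a n - b n| + (|b n - u| + |u - t|) := by linarith [abs_sub_le (b n) u t]
      _ = _ := by ring
  rw [Real.dist_eq]
  have : |u - t| = |t - u| := abs_sub_comm _ _
  calc |a n - t| ≤ |a n - b n| + |b n - u| + |u - t| := by
        calc |a n - t| ≤ |a n - b n| + |b n - t| := abs_sub_le _ _ _
          _ ≤ |a n - b n| + (|b n - u| + |u - t|) := by linarith [abs_sub_le (b n) u t]
          _ = _ := by ring
    _ < ε := by rw [abs_sub_comm u t]; linarith

/-- A function with a Lipschitz-type bound is continuous. -/
lemma aux_cont_of_lip {E : Type*} [PseudoMetricSpace E] {f : E → ℝ} {L : ℝ}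
    (h : ∀ x y, |f x - f y| ≤ L * dist x y) : Continuous f := by
  have : LipschitzWith (Real.toNNReal L) f := by
    apply LipschitzWith.of_dist_le_mul
    intro x y
    calc dist (f x) (f y) = |f x - f y| := Real.dist_eq _ _
      _ ≤ L * dist x y := h x y
      _ ≤ (Real.toNNReal L) * dist x y := by
          gcongr
          exact Real.le_coe_toNNReal L
  exact this.continuous

/-- Bounded a.e.-strongly-measurable functions are integrable on finite measure spaces. -/
lemma aux_integrable_of_bounded {Ω : Type*} [MeasurableSpace Ω] {P : Measure Ω}
    [IsFiniteMeasure P] {f : Ω → ℝ} (hm : AEStronglyMeasurable f P) {B : ℝ}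
    (hb : ∀ ω, |f ω| ≤ B) : Integrable f P :=
  ⟨hm, HasFiniteIntegral.of_bounded (C := B) (Eventually.of_forall (by
    simpa [Real.norm_eq_abs] using hb))⟩


variable {E : Type*} [PseudoMetricSpace E] [Nonempty E]

/-- Moreau–Yosida approximation of a nonnegative bounded continuous function. -/
noncomputable def auxMY (f : E →ᵇ ℝ) (m : ℕ) (x : E) : ℝ := ⨅ y : E, (f y + m * dist x y)

lemma auxMY_bddBelow (f : E →ᵇ ℝ) (hf : 0 ≤ f) (m : ℕ) (x : E) :
    BddBelow (Set.range fun y : E => f y + m * dist x y) := by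
  refine ⟨0, ?_⟩
  rintro w ⟨y, rfl⟩
  dsimp only
  have h1 : (0:ℝ) ≤ f y := by simpa using hf y
  have h2 : (0:ℝ) ≤ (m:ℝ) * dist x y := by positivity
  linarith

lemma auxMY_nonneg (f : E →ᵇ ℝ) (hf : 0 ≤ f) (m : ℕ) (x : E) : 0 ≤ auxMY f m x := by
  refine le_ciInf fun y => ?_
  have h1 : (0:ℝ) ≤ f y := by simpa using hf y
  have h2 : (0:ℝ) ≤ (m:ℝ) * dist x y := by positivity
  linarith

lemma auxMY_le (f : E →ᵇ ℝ) (hf : 0 ≤ f) (m : ℕ) (x : E) : auxMY f m x ≤ f x := by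
  have := ciInf_le (auxMY_bddBelow f hf m x) x
  simpa [auxMY] using this

lemma auxMY_le_add (f : E →ᵇ ℝ) (hf : 0 ≤ f) (m : ℕ) (x y : E) :
    auxMY f m x ≤ auxMY f m y + m * dist x y := by
  rw [← sub_le_iff_le_add]
  refine le_ciInf fun z => ?_
  rw [sub_le_iff_le_add]
  calc auxMY f m x ≤ f z + m * dist x z := ciInf_le (auxMY_bddBelow f hf m x) z
    _ ≤ f z + m * (dist x y + dist y z) := by
        gcongr
        exact dist_triangle x y z
    _ = f z + m * dist y z + m * dist x y := by ring

lemma auxMY_lip (f : E →ᵇ ℝ) (hf : 0 ≤ f) (m : ℕ) (x y : E) :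
    |auxMY f m x - auxMY f m y| ≤ m * dist x y := by
  rw [abs_sub_le_iff]
  constructor
  · linarith [auxMY_le_add f hf m x y]
  · have := auxMY_le_add f hf m y x
    rw [dist_comm y x] at this
    linarith

lemma auxMY_mono (f : E →ᵇ ℝ) (hf : 0 ≤ f) (x : E) :
    Monotone fun m : ℕ => auxMY f m x := by
  intro m m' hm
  refine ciInf_mono (auxMY_bddBelow f hf m x) fun y => ?_
  have hmm : (m : ℝ) ≤ (m' : ℝ) := by exact_mod_cast hm
  have := mul_le_mul_of_nonneg_right hmm (dist_nonneg (x := x) (y := y))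
  linarith

lemma auxMY_tendsto (f : E →ᵇ ℝ) (hf : 0 ≤ f) (x : E) :
    Tendsto (fun m : ℕ => auxMY f m x) atTop (𝓝 (f x)) := by
  rw [Metric.tendsto_atTop]
  intro ε hε
  obtain ⟨r, hr, hcont⟩ := Metric.continuousAt_iff.mp (f.continuous.continuousAt (x := x))
    (ε / 2) (by linarith)
  obtain ⟨M, hM⟩ := exists_nat_ge (‖f‖ / r)
  refine ⟨M, fun m hm => ?_⟩
  have h1 : auxMY f m x ≤ f x := auxMY_le f hf m x
  have h2 : f x - ε / 2 ≤ auxMY f m x := by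
    refine le_ciInf fun y => ?_
    by_cases hy : dist y x < r
    · have := hcont hy
      rw [Real.dist_eq] at this
      have hfy : f x - ε / 2 ≤ f y := by
        cases' abs_sub_lt_iff.mp this with h _
        linarith
      have : (0:ℝ) ≤ (m:ℝ) * dist x y := by positivity
      linarith
    · push_neg at hy
      have hmr : ‖f‖ ≤ (m : ℝ) * r := by
        have hm' : (‖f‖ / r) ≤ (m : ℝ) := le_trans hM (by exact_mod_cast hm)
        calc ‖f‖ = (‖f‖ / r) * r := by field_simp
          _ ≤ (m : ℝ) * r := by gcongr
      have hfx : f x ≤ ‖f‖ := le_trans (le_abs_self _) (f.norm_coe_le_norm x)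
      have hfy : (0:ℝ) ≤ f y := by
        have := hf y
        simpa using this
      have : (m : ℝ) * r ≤ (m : ℝ) * dist x y := by
        rw [dist_comm x y]
        gcongr
      linarith
  rw [Real.dist_eq, abs_sub_comm]
  have : |f x - auxMY f m x| = f x - auxMY f m x := abs_of_nonneg (by linarith)
  rw [this]
  linarith


lemma aux_cell_iff {δ : ℝ} (hδ : 0 < δ) (j : ℤ) (b : ℝ) :
    ((j:ℝ)*δ ≤ b ∧ b < ((j:ℝ)+1)*δ) ↔ j = ⌊b/δ⌋ := by
  rw [eq_comm, Int.floor_eq_iff]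
  constructor
  · rintro ⟨h1, h2⟩
    constructor
    · rwa [le_div_iff₀ hδ]
    · rw [div_lt_iff₀ hδ]
      push_cast
      linarith
  · rintro ⟨h1, h2⟩
    rw [le_div_iff₀ hδ] at h1
    rw [div_lt_iff₀ hδ] at h2
    push_cast at h2 ⊢
    exact ⟨h1, h2⟩

lemma aux_collapse {δ : ℝ} (hδ : 0 < δ) (S : Finset (ℤ × ℤ)) (g : ℤ × ℤ → ℝ) (b c : ℝ) :
    (∑ p ∈ S, g p * (if ((p.1:ℝ)*δ ≤ b ∧ b < ((p.1:ℝ)+1)*δ) ∧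
        ((p.2:ℝ)*δ ≤ c ∧ c < ((p.2:ℝ)+1)*δ) then (1:ℝ) else 0))
      = if (⌊b/δ⌋, ⌊c/δ⌋) ∈ S then g (⌊b/δ⌋, ⌊c/δ⌋) else 0 := by
  have key : ∀ p : ℤ × ℤ,
      (((p.1:ℝ)*δ ≤ b ∧ b < ((p.1:ℝ)+1)*δ) ∧ ((p.2:ℝ)*δ ≤ c ∧ c < ((p.2:ℝ)+1)*δ))
        ↔ p = (⌊b/δ⌋, ⌊c/δ⌋) := by
    intro p
    rw [aux_cell_iff hδ, aux_cell_iff hδ, Prod.ext_iff]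
  calc (∑ p ∈ S, g p * (if ((p.1:ℝ)*δ ≤ b ∧ b < ((p.1:ℝ)+1)*δ) ∧
        ((p.2:ℝ)*δ ≤ c ∧ c < ((p.2:ℝ)+1)*δ) then (1:ℝ) else 0))
      = ∑ p ∈ S, if p = (⌊b/δ⌋, ⌊c/δ⌋) then g p else 0 := by
        refine Finset.sum_congr rfl fun p _ => ?_
        rw [if_congr (key p) rfl rfl]
        split_ifs <;> simp
    _ = _ := Finset.sum_ite_eq' S _ g

open MeasureTheory in
lemma aux_int_diff_bound {Ω : Type*} [MeasurableSpace Ω] (P : Measure Ω) [IsProbabilityMeasure P]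
    (g1 g2 : Ω → ℝ) (h1 : Integrable g1 P) (h2 : Integrable g2 P)
    (c d : ℝ) (A : Set Ω) (hA : MeasurableSet A)
    (hbd : ∀ ω, |g1 ω - g2 ω| ≤ c + Set.indicator A (fun _ => d) ω) :
    |∫ ω, g1 ω ∂P - ∫ ω, g2 ω ∂P| ≤ c + d * (P A).toReal := by
  rw [← integral_sub h1 h2]
  have hdom : Integrable (fun ω => c + Set.indicator A (fun _ => d) ω) P :=
    (integrable_const c).add ((integrable_const d).indicator hA)
  calc |∫ ω, (g1 ω - g2 ω) ∂P| ≤ ∫ ω, (c + Set.indicator A (fun _ => d) ω) ∂P := by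
        rw [← Real.norm_eq_abs]
        refine norm_integral_le_of_norm_le hdom (Eventually.of_forall fun ω => ?_)
        simpa [Real.norm_eq_abs] using hbd ω
    _ = c + d * (P A).toReal := by
        rw [integral_add (integrable_const c) ((integrable_const d).indicator hA),
          integral_const, integral_indicator_const _ hA]
        simp [measure_univ, mul_comm, measureReal_def]

lemma aux_abs_sub_le_two {a b B : ℝ} (ha : |a| ≤ B) (hb : |b| ≤ B) : |a - b| ≤ 2 * B := by
  rw [sub_eq_add_neg]
  calc |a + -b| ≤ |a| + |-b| := abs_add_le _ _
    _ = |a| + |b| := by rw [abs_neg]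
    _ ≤ 2 * B := by linarith


/-- The σ-algebra generated by the processes. -/
def auxSig {Ω : Type*} [MeasurableSpace Ω] (Y1 Y2 : ℕ → Ω → ℝ) : MeasurableSpace Ω :=
  ⨆ n : ℕ, MeasurableSpace.comap (Y1 n) inferInstance ⊔ MeasurableSpace.comap (Y2 n) inferInstance

theorem aux_main {Ω Ω' : Type*} [MeasurableSpace Ω] [MeasurableSpace Ω']
    (P : Measure Ω) (P' : Measure Ω')
    [IsProbabilityMeasure P] [IsProbabilityMeasure P']
    (Y1 Y2 : ℕ → Ω → ℝ)
    (hY1meas : ∀ n, Measurable (Y1 n)) (hY2meas : ∀ n, Measurable (Y2 n))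
    (Ybar : Ω × Ω' → ℝ) (hYbar : Measurable Ybar)
    (Y2lim : Ω → ℝ)
    (hY2lim : Measurable[⨆ n : ℕ,
      MeasurableSpace.comap (Y1 n) inferInstance ⊔ MeasurableSpace.comap (Y2 n) inferInstance]
      Y2lim)
    (hconv1 : ∀ Z : Ω → ℝ,
      Measurable[⨆ n : ℕ, MeasurableSpace.comap (Y1 n) inferInstance ⊔
        MeasurableSpace.comap (Y2 n) inferInstance] Z →
      (∃ C : ℝ, ∀ ω, |Z ω| ≤ C) →
      ∀ g : BoundedContinuousFunction (ℝ × ℝ) ℝ,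
        Tendsto (fun n => ∫ ω, g (Y1 n ω, Z ω) ∂P) atTop
          (𝓝 (∫ ωp, g (Ybar ωp, Z ωp.1) ∂(P.prod P'))))
    (hconv2 : TendstoInMeasure P Y2 atTop Y2lim)
    (Z : Ω → ℝ)
    (hZmeas : Measurable[⨆ n : ℕ, MeasurableSpace.comap (Y1 n) inferInstance ⊔
        MeasurableSpace.comap (Y2 n) inferInstance] Z)
    (C : ℝ) (hZbd : ∀ ω, |Z ω| ≤ C) :
    ∀ g : BoundedContinuousFunction (ℝ × ℝ × ℝ) ℝ,
      Tendsto (fun n => ∫ ω, g (Y1 n ω, Y2 n ω, Z ω) ∂P) atTop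
        (𝓝 (∫ ωp, g (Ybar ωp, Y2lim ωp.1, Z ωp.1) ∂(P.prod P'))) := by
  have h𝔽le : auxSig Y1 Y2 ≤ ‹MeasurableSpace Ω› := iSup_le fun n =>
    sup_le (measurable_iff_comap_le.mp (hY1meas n)) (measurable_iff_comap_le.mp (hY2meas n))
  have hZF : Measurable[auxSig Y1 Y2] Z := hZmeas
  have hY2limF : Measurable[auxSig Y1 Y2] Y2lim := hY2lim
  have hZm : Measurable Z := hZF.mono h𝔽le le_rfl
  have hY2limm : Measurable Y2lim := hY2limF.mono h𝔽le le_rfl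
  -- Key lemma: stable convergence against bounded 𝔽-measurable weights
  have K : ∀ (fb : ℝ →ᵇ ℝ) (W : Ω → ℝ), Measurable[auxSig Y1 Y2] W → (∀ ω, |W ω| ≤ 1) →
      Tendsto (fun n => ∫ ω, (fb (Y1 n ω)) * W ω ∂P) atTop
        (𝓝 (∫ ωp, (fb (Ybar ωp)) * W ωp.1 ∂(P.prod P'))) := by
    intro fb W hWm hWb
    have hcl : Continuous fun w : ℝ => max (-1) (min 1 w) := continuous_const.max (continuous_const.min continuous_id)
    set clamp : ℝ →ᵇ ℝ := BoundedContinuousFunction.mkOfBound ⟨_, hcl⟩ 2 (fun x y => by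
      have hx1 : max (-1) (min 1 x) ≤ 1 := max_le (by norm_num) (min_le_left _ _)
      have hx2 : (-1:ℝ) ≤ max (-1) (min 1 x) := le_max_left _ _
      have hy1 : max (-1) (min 1 y) ≤ 1 := max_le (by norm_num) (min_le_left _ _)
      have hy2 : (-1:ℝ) ≤ max (-1) (min 1 y) := le_max_left _ _
      rw [Real.dist_eq]
      rw [abs_le]
      constructor <;> simp only [ContinuousMap.coe_mk] <;> nlinarith) with hclamp
    have hclampeq : ∀ w : ℝ, |w| ≤ 1 → clamp w = w := by
      intro w hw
      rw [abs_le] at hw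
      show max (-1) (min 1 w) = w
      rw [min_eq_right hw.2, max_eq_right hw.1]
    set g : BoundedContinuousFunction (ℝ × ℝ) ℝ :=
      (fb.compContinuous ⟨Prod.fst, continuous_fst⟩) *
        (clamp.compContinuous ⟨Prod.snd, continuous_snd⟩) with hgdef
    have hgeq : ∀ y w : ℝ, |w| ≤ 1 → g (y, w) = fb y * w := by
      intro y w hw
      show fb y * clamp w = fb y * w
      rw [hclampeq w hw]
    have h := hconv1 W hWm ⟨1, hWb⟩ g
    have e1 : (fun n => ∫ ω, g (Y1 n ω, W ω) ∂P) = fun n => ∫ ω, fb (Y1 n ω) * W ω ∂P := by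
      funext n
      exact integral_congr_ae (Eventually.of_forall fun ω => hgeq _ _ (hWb ω))
    have e2 : (∫ ωp, g (Ybar ωp, W ωp.1) ∂(P.prod P'))
        = ∫ ωp, fb (Ybar ωp) * W ωp.1 ∂(P.prod P') :=
      integral_congr_ae (Eventually.of_forall fun ωp => hgeq _ _ (hWb ωp.1))
    rw [e1, e2] at h
    exact h
  -- Key Lipschitz lemma
  have KeyLip : ∀ (f : ℝ × ℝ × ℝ → ℝ) (L B : ℝ), 0 ≤ L → 0 ≤ B →
      (∀ x y, |f x - f y| ≤ L * dist x y) → (∀ x, |f x| ≤ B) →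
      Tendsto (fun n => ∫ ω, f (Y1 n ω, Y2 n ω, Z ω) ∂P) atTop
        (𝓝 (∫ ωp, f (Ybar ωp, Y2lim ωp.1, Z ωp.1) ∂(P.prod P'))) := by
    intro f L B hL0 hB0 hLip hBd
    have hfc : Continuous f := aux_cont_of_lip hLip
    apply aux_tendsto_of_approx
    intro ε hε
    set δ : ℝ := ε / (4 * (L + 1)) with hδdef
    have hδ : 0 < δ := by positivity
    have hδε : δ * (4 * (L + 1)) = ε := by
      rw [hδdef]; field_simp
    have hLδ : L * δ ≤ ε / 4 := by nlinarith
    -- truncation level R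
    have htrunc : Tendsto (fun R : ℕ => 2 * B * (P {ω | (R:ℝ) ≤ |Y2lim ω|}).toReal)
        atTop (𝓝 0) := by
      have hmeasR : ∀ R : ℕ, MeasurableSet {ω | (R:ℝ) ≤ |Y2lim ω|} :=
        fun R => measurableSet_le measurable_const hY2limm.abs
      have hanti : Antitone fun R : ℕ => {ω | (R:ℝ) ≤ |Y2lim ω|} := by
        intro R R' h ω hω
        simp only [Set.mem_setOf_eq] at hω ⊢
        have : (R:ℝ) ≤ (R':ℝ) := by exact_mod_cast h
        linarith
      have h1 := tendsto_measure_iInter_atTop (μ := P)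
        (fun R => (hmeasR R).nullMeasurableSet) hanti ⟨0, measure_ne_top _ _⟩
      have hempty : (⋂ R : ℕ, {ω | (R:ℝ) ≤ |Y2lim ω|}) = ∅ := by
        ext ω
        simp only [Set.mem_iInter, Set.mem_setOf_eq, Set.mem_empty_iff_false, iff_false]
        push_neg
        obtain ⟨R, hR⟩ := exists_nat_gt (|Y2lim ω|)
        exact ⟨R, hR⟩
      rw [hempty] at h1
      simp only [measure_empty] at h1
      have h2 := (ENNReal.tendsto_toReal (ENNReal.zero_ne_top)).comp h1
      simp only [ENNReal.toReal_zero] at h2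
      simpa using h2.const_mul (2 * B)
    have hε8 : (0:ℝ) < ε / 8 := by linarith
    obtain ⟨R, hPA⟩ := ((htrunc.eventually (gt_mem_nhds hε8)).and
      (eventually_atTop.mpr ⟨1, fun n hn => hn⟩)).exists
    set A : Set Ω := {ω | (R:ℝ) ≤ |Y2lim ω|} with hAdef
    have hAmeas : MeasurableSet A := measurableSet_le measurable_const hY2limm.abs
    have hPA' : 2 * B * (P A).toReal ≤ ε / 8 := le_of_lt hPA.1
    -- grid size N
    obtain ⟨N, hN⟩ := exists_nat_ge (max (R:ℝ) (C+1) / δ)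
    have hNδ : max (R:ℝ) (C+1) ≤ (N:ℝ) * δ := by
      rw [div_le_iff₀ hδ] at hN; linarith
    have hRN : (R:ℝ) ≤ (N:ℝ) * δ := le_trans (le_max_left _ _) hNδ
    have hCN : C + 1 ≤ (N:ℝ) * δ := le_trans (le_max_right _ _) hNδ
    -- the grid
    set S : Finset (ℤ × ℤ) := Finset.Icc (-(N:ℤ)) N ×ˢ Finset.Icc (-(N:ℤ)) N with hSdef
    set W : ℤ × ℤ → Ω → ℝ := fun p ω =>
      if ((p.1:ℝ)*δ ≤ Y2lim ω ∧ Y2lim ω < ((p.1:ℝ)+1)*δ) ∧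
          ((p.2:ℝ)*δ ≤ Z ω ∧ Z ω < ((p.2:ℝ)+1)*δ) then 1 else 0 with hWdef
    have hWsetF : ∀ p : ℤ × ℤ, MeasurableSet[auxSig Y1 Y2]
        {ω | ((p.1:ℝ)*δ ≤ Y2lim ω ∧ Y2lim ω < ((p.1:ℝ)+1)*δ) ∧
          ((p.2:ℝ)*δ ≤ Z ω ∧ Z ω < ((p.2:ℝ)+1)*δ)} := by
      intro p
      have : {ω | ((p.1:ℝ)*δ ≤ Y2lim ω ∧ Y2lim ω < ((p.1:ℝ)+1)*δ) ∧
          ((p.2:ℝ)*δ ≤ Z ω ∧ Z ω < ((p.2:ℝ)+1)*δ)}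
          = Y2lim ⁻¹' (Set.Ico ((p.1:ℝ)*δ) (((p.1:ℝ)+1)*δ)) ∩
            Z ⁻¹' (Set.Ico ((p.2:ℝ)*δ) (((p.2:ℝ)+1)*δ)) := by
        ext ω
        simp [Set.mem_Ico]
      rw [this]
      exact (hY2limF measurableSet_Ico).inter (hZF measurableSet_Ico)
    have hWmF : ∀ p : ℤ × ℤ, Measurable[auxSig Y1 Y2] (W p) := by
      intro p
      exact Measurable.ite (hWsetF p) measurable_const measurable_const
    have hWm : ∀ p : ℤ × ℤ, Measurable (W p) := fun p => (hWmF p).mono h𝔽le le_rfl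
    have hWb : ∀ (p : ℤ × ℤ) (ω : Ω), |W p ω| ≤ 1 := by
      intro p ω
      rw [hWdef]
      dsimp only
      split_ifs <;> norm_num
    -- the approximating sequence
    set bseq : ℕ → ℝ := fun n =>
      ∑ p ∈ S, ∫ ω, f (Y1 n ω, (p.1:ℝ)*δ, (p.2:ℝ)*δ) * W p ω ∂P with hbseq
    set u : ℝ := ∑ p ∈ S, ∫ ωp, f (Ybar ωp, (p.1:ℝ)*δ, (p.2:ℝ)*δ) * W p ωp.1 ∂(P.prod P')
      with hu
    -- floor facts
    have hfl1 : ∀ b : ℝ, (⌊b/δ⌋ : ℝ) * δ ≤ b := by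
      intro b
      calc (⌊b/δ⌋:ℝ)*δ ≤ (b/δ)*δ := mul_le_mul_of_nonneg_right (Int.floor_le (b/δ)) hδ.le
        _ = b := div_mul_cancel₀ b hδ.ne'
    have hfl2 : ∀ b : ℝ, b < ((⌊b/δ⌋:ℝ) + 1) * δ := by
      intro b
      calc b = (b/δ)*δ := (div_mul_cancel₀ b hδ.ne').symm
        _ < ((⌊b/δ⌋:ℝ)+1)*δ := by
            apply mul_lt_mul_of_pos_right _ hδ
            exact_mod_cast Int.lt_floor_add_one (b/δ)
    have hmemIcc : ∀ b : ℝ, |b| < (N:ℝ)*δ → ⌊b/δ⌋ ∈ Finset.Icc (-(N:ℤ)) N := by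
      intro b hb
      rw [abs_lt] at hb
      rw [Finset.mem_Icc]
      constructor
      · apply Int.le_floor.mpr
        push_cast
        rw [le_div_iff₀ hδ]
        nlinarith [hb.1]
      · refine le_of_lt (Int.floor_lt.mpr ?_)
        push_cast
        rw [div_lt_iff₀ hδ]
        exact hb.2
    -- the pointwise grid approximation claim
    have claim : ∀ (y : ℝ) (ω : Ω),
        |f (y, Y2lim ω, Z ω) - ∑ p ∈ S, f (y, (p.1:ℝ)*δ, (p.2:ℝ)*δ) * W p ω|
          ≤ L * δ + Set.indicator A (fun _ => 2*B) ω := by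
      intro y ω
      have hsum : (∑ p ∈ S, f (y, (p.1:ℝ)*δ, (p.2:ℝ)*δ) * W p ω)
          = if (⌊Y2lim ω/δ⌋, ⌊Z ω/δ⌋) ∈ S then
              f (y, ((⌊Y2lim ω/δ⌋:ℤ):ℝ)*δ, ((⌊Z ω/δ⌋:ℤ):ℝ)*δ) else 0 := by
        rw [hWdef]
        exact aux_collapse hδ S (fun p => f (y, (p.1:ℝ)*δ, (p.2:ℝ)*δ)) (Y2lim ω) (Z ω)
      rw [hsum]
      have hLδ0 : (0:ℝ) ≤ L * δ := by positivity
      by_cases hωA : ω ∈ A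
      · rw [Set.indicator_of_mem hωA]
        have h2 : |if (⌊Y2lim ω/δ⌋, ⌊Z ω/δ⌋) ∈ S then
            f (y, ((⌊Y2lim ω/δ⌋:ℤ):ℝ)*δ, ((⌊Z ω/δ⌋:ℤ):ℝ)*δ) else 0| ≤ B := by
          split_ifs
          · exact hBd _
          · simpa using hB0
        have := aux_abs_sub_le_two (hBd (y, Y2lim ω, Z ω)) h2
        linarith
      · rw [Set.indicator_of_notMem hωA]
        have hb : |Y2lim ω| < R := by
          simp only [hAdef, Set.mem_setOf_eq, not_le] at hωA
          exact hωA
        have hbN : |Y2lim ω| < (N:ℝ)*δ := lt_of_lt_of_le hb hRN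
        have hcN : |Z ω| < (N:ℝ)*δ := lt_of_le_of_lt (hZbd ω) (by linarith)
        have hmem : ((⌊Y2lim ω/δ⌋ : ℤ), (⌊Z ω/δ⌋ : ℤ)) ∈ S := by
          rw [hSdef, Finset.mem_product]
          exact ⟨hmemIcc _ hbN, hmemIcc _ hcN⟩
        rw [if_pos hmem]
        have hdb : dist (Y2lim ω) (((⌊Y2lim ω/δ⌋:ℤ):ℝ)*δ) ≤ δ := by
          rw [Real.dist_eq, abs_le]
          have e1 := hfl1 (Y2lim ω)
          have e2 := hfl2 (Y2lim ω)
          have e3 : ((⌊Y2lim ω/δ⌋:ℝ)+1)*δ = (⌊Y2lim ω/δ⌋:ℝ)*δ + δ := by ring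
          constructor <;> linarith
        have hdc : dist (Z ω) (((⌊Z ω/δ⌋:ℤ):ℝ)*δ) ≤ δ := by
          rw [Real.dist_eq, abs_le]
          have e1 := hfl1 (Z ω)
          have e2 := hfl2 (Z ω)
          have e3 : ((⌊Z ω/δ⌋:ℝ)+1)*δ = (⌊Z ω/δ⌋:ℝ)*δ + δ := by ring
          constructor <;> linarith
        have hd : dist ((y, Y2lim ω, Z ω) : ℝ × ℝ × ℝ)
            ((y, ((⌊Y2lim ω/δ⌋:ℤ):ℝ)*δ, ((⌊Z ω/δ⌋:ℤ):ℝ)*δ)) ≤ δ := by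
          rw [Prod.dist_eq]
          apply max_le
          · simpa using hδ.le
          · rw [Prod.dist_eq]
            exact max_le hdb hdc
        calc |f (y, Y2lim ω, Z ω) - f (y, ((⌊Y2lim ω/δ⌋:ℤ):ℝ)*δ, ((⌊Z ω/δ⌋:ℤ):ℝ)*δ)|
            ≤ L * dist ((y, Y2lim ω, Z ω) : ℝ × ℝ × ℝ)
              ((y, ((⌊Y2lim ω/δ⌋:ℤ):ℝ)*δ, ((⌊Z ω/δ⌋:ℤ):ℝ)*δ) : ℝ × ℝ × ℝ) := hLip _ _
          _ ≤ L * δ := mul_le_mul_of_nonneg_left hd hL0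
          _ ≤ L * δ + 0 := by simp
    -- integrability facts
    have intgrid : ∀ (n : ℕ) (p : ℤ × ℤ),
        Integrable (fun ω => f (Y1 n ω, (p.1:ℝ)*δ, (p.2:ℝ)*δ) * W p ω) P := by
      intro n p
      refine aux_integrable_of_bounded (B := B)
        ((hfc.measurable.comp ((hY1meas n).prodMk
          (measurable_const.prodMk measurable_const))).mul (hWm p)).aestronglyMeasurable ?_
      intro ω
      rw [abs_mul]
      calc |f (Y1 n ω, (p.1:ℝ)*δ, (p.2:ℝ)*δ)| * |W p ω| ≤ B * 1 :=
          mul_le_mul (hBd _) (hWb p ω) (abs_nonneg _) hB0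
        _ = B := mul_one B
    have intgridbar : ∀ p : ℤ × ℤ,
        Integrable (fun ωp => f (Ybar ωp, (p.1:ℝ)*δ, (p.2:ℝ)*δ) * W p ωp.1) (P.prod P') := by
      intro p
      refine aux_integrable_of_bounded (B := B)
        ((hfc.measurable.comp (hYbar.prodMk
          (measurable_const.prodMk measurable_const))).mul
            ((hWm p).comp measurable_fst)).aestronglyMeasurable ?_
      intro ωp
      rw [abs_mul]
      calc |f (Ybar ωp, (p.1:ℝ)*δ, (p.2:ℝ)*δ)| * |W p ωp.1| ≤ B * 1 :=
          mul_le_mul (hBd _) (hWb p ωp.1) (abs_nonneg _) hB0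
        _ = B := mul_one B
    have intf1 : ∀ n, Integrable (fun ω => f (Y1 n ω, Y2 n ω, Z ω)) P := fun n =>
      aux_integrable_of_bounded (B := B)
        (hfc.measurable.comp ((hY1meas n).prodMk
          ((hY2meas n).prodMk hZm))).aestronglyMeasurable (fun ω => hBd _)
    have intf2 : ∀ n, Integrable (fun ω => f (Y1 n ω, Y2lim ω, Z ω)) P := fun n =>
      aux_integrable_of_bounded (B := B)
        (hfc.measurable.comp ((hY1meas n).prodMk
          (hY2limm.prodMk hZm))).aestronglyMeasurable (fun ω => hBd _)
    have intfbar : Integrable (fun ωp => f (Ybar ωp, Y2lim ωp.1, Z ωp.1)) (P.prod P') :=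
      aux_integrable_of_bounded (B := B)
        (hfc.measurable.comp (hYbar.prodMk
          ((hY2limm.comp measurable_fst).prodMk (hZm.comp measurable_fst)))).aestronglyMeasurable
        (fun ωp => hBd _)
    refine ⟨bseq, u, ?_, ?_, ?_⟩
    · -- convergence of the grid sums, via K
      apply tendsto_finset_sum
      intro p _
      have hcont : Continuous fun y : ℝ => f (y, (p.1:ℝ)*δ, (p.2:ℝ)*δ) :=
        hfc.comp (continuous_id.prodMk (continuous_const.prodMk continuous_const))
      set fb : ℝ →ᵇ ℝ := BoundedContinuousFunction.mkOfBound ⟨_, hcont⟩ (2*B) (fun x y => by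
        rw [Real.dist_eq]
        simp only [ContinuousMap.coe_mk]
        have h1 := hBd (x, (p.1:ℝ)*δ, (p.2:ℝ)*δ)
        have h2 := hBd (y, (p.1:ℝ)*δ, (p.2:ℝ)*δ)
        calc |f (x, (p.1:ℝ)*δ, (p.2:ℝ)*δ) - f (y, (p.1:ℝ)*δ, (p.2:ℝ)*δ)|
            ≤ |f (x, (p.1:ℝ)*δ, (p.2:ℝ)*δ)| + |f (y, (p.1:ℝ)*δ, (p.2:ℝ)*δ)| := by
              rw [sub_eq_add_neg]
              exact (abs_add_le _ _).trans (by rw [abs_neg])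
          _ ≤ 2 * B := by linarith) with hfb
      exact K fb (W p) (hWmF p) (hWb p)
    · -- eventual closeness
      set An : ℕ → Set Ω := fun n => {ω | δ ≤ dist (Y2 n ω) (Y2lim ω)} with hAn
      have hAnmeas : ∀ n, MeasurableSet (An n) :=
        fun n => measurableSet_le measurable_const ((hY2meas n).dist hY2limm)
      have claim2 : ∀ (n : ℕ) (ω : Ω),
          |f (Y1 n ω, Y2 n ω, Z ω) - f (Y1 n ω, Y2lim ω, Z ω)|
            ≤ L * δ + Set.indicator (An n) (fun _ => 2*B) ω := by
        intro n ω
        have hLδ0 : (0:ℝ) ≤ L * δ := by positivity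
        by_cases h : ω ∈ An n
        · rw [Set.indicator_of_mem h]
          have := aux_abs_sub_le_two (hBd (Y1 n ω, Y2 n ω, Z ω)) (hBd (Y1 n ω, Y2lim ω, Z ω))
          linarith
        · rw [Set.indicator_of_notMem h]
          have hlt : dist (Y2 n ω) (Y2lim ω) < δ := by
            simp only [hAn, Set.mem_setOf_eq, not_le] at h
            exact h
          have hd : dist ((Y1 n ω, Y2 n ω, Z ω) : ℝ×ℝ×ℝ) ((Y1 n ω, Y2lim ω, Z ω)) ≤ δ := by
            rw [Prod.dist_eq]
            apply max_le
            · simpa using hδ.le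
            · rw [Prod.dist_eq]
              apply max_le hlt.le
              simpa using hδ.le
          calc |f (Y1 n ω, Y2 n ω, Z ω) - f (Y1 n ω, Y2lim ω, Z ω)|
              ≤ L * dist ((Y1 n ω, Y2 n ω, Z ω) : ℝ×ℝ×ℝ) ((Y1 n ω, Y2lim ω, Z ω)) := hLip _ _
            _ ≤ L * δ := mul_le_mul_of_nonneg_left hd hL0
            _ ≤ L * δ + 0 := by simp
      have estim1 : ∀ n, |∫ ω, f (Y1 n ω, Y2 n ω, Z ω) ∂P - ∫ ω, f (Y1 n ω, Y2lim ω, Z ω) ∂P|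
          ≤ L * δ + 2*B * (P (An n)).toReal :=
        fun n => aux_int_diff_bound P _ _ (intf1 n) (intf2 n) _ _ (An n) (hAnmeas n) (claim2 n)
      have estim2 : ∀ n, |∫ ω, f (Y1 n ω, Y2lim ω, Z ω) ∂P - bseq n|
          ≤ L * δ + 2*B * (P A).toReal := by
        intro n
        have hbn : bseq n = ∫ ω, (∑ p ∈ S, f (Y1 n ω, (p.1:ℝ)*δ, (p.2:ℝ)*δ) * W p ω) ∂P :=
          (integral_finset_sum S fun p _ => intgrid n p).symm
        rw [hbn]
        exact aux_int_diff_bound P _ _ (intf2 n)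
          (integrable_finset_sum S fun p _ => intgrid n p) _ _ A hAmeas
          (fun ω => claim (Y1 n ω) ω)
      have hAn_ev : ∀ᶠ n in atTop, 2*B*(P (An n)).toReal ≤ ε/4 := by
        have h0 := tendstoInMeasure_iff_dist.mp hconv2 δ hδ
        have h1 := (ENNReal.tendsto_toReal (ENNReal.zero_ne_top)).comp h0
        simp only [ENNReal.toReal_zero] at h1
        have h2 : Tendsto (fun n => 2*B*(P (An n)).toReal) atTop (𝓝 0) := by
          have h3 := h1.const_mul (2*B)
          simpa using h3
        exact (h2.eventually (gt_mem_nhds (by linarith : (0:ℝ) < ε/4))).mono fun n hn => hn.le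
      filter_upwards [hAn_ev] with n hn
      calc |∫ ω, f (Y1 n ω, Y2 n ω, Z ω) ∂P - bseq n|
          ≤ |∫ ω, f (Y1 n ω, Y2 n ω, Z ω) ∂P - ∫ ω, f (Y1 n ω, Y2lim ω, Z ω) ∂P|
            + |∫ ω, f (Y1 n ω, Y2lim ω, Z ω) ∂P - bseq n| := abs_sub_le _ _ _
        _ ≤ ε := by
            have e1 := estim1 n
            have e2 := estim2 n
            linarith
    · -- bar-side closeness
      have hueq : u = ∫ ωp, (∑ p ∈ S, f (Ybar ωp, (p.1:ℝ)*δ, (p.2:ℝ)*δ) * W p ωp.1)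
          ∂(P.prod P') :=
        (integral_finset_sum S fun p _ => intgridbar p).symm
      have hind : ∀ ωp : Ω × Ω', Set.indicator A (fun _ => (2*B:ℝ)) ωp.1
          = Set.indicator (A ×ˢ (Set.univ : Set Ω')) (fun _ => (2*B:ℝ)) ωp := by
        intro ωp
        by_cases h : ωp.1 ∈ A
        · rw [Set.indicator_of_mem h, Set.indicator_of_mem (Set.mem_prod.mpr ⟨h, Set.mem_univ _⟩)]
        · rw [Set.indicator_of_notMem h, Set.indicator_of_notMem (fun hmem => h hmem.1)]
      have hbar : |∫ ωp, f (Ybar ωp, Y2lim ωp.1, Z ωp.1) ∂(P.prod P') - u|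
          ≤ L * δ + 2*B * ((P.prod P') (A ×ˢ (Set.univ : Set Ω'))).toReal := by
        rw [hueq]
        refine aux_int_diff_bound (P.prod P') _ _ intfbar
          (integrable_finset_sum S fun p _ => intgridbar p) _ _ _
          (hAmeas.prod MeasurableSet.univ) ?_
        intro ωp
        have h := claim (Ybar ωp) ωp.1
        rw [← hind ωp]
        exact h
      have hprod : ((P.prod P') (A ×ˢ (Set.univ : Set Ω'))).toReal = (P A).toReal := by
        rw [Measure.prod_prod, measure_univ, mul_one]
      rw [hprod] at hbar
      linarith
    -- general bounded continuous case via portmanteau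
  intro g
  have hXn : ∀ n, Measurable fun ω => (Y1 n ω, Y2 n ω, Z ω) := fun n =>
    (hY1meas n).prodMk ((hY2meas n).prodMk hZm)
  have hXbar : Measurable fun ωp : Ω × Ω' => (Ybar ωp, Y2lim ωp.1, Z ωp.1) :=
    hYbar.prodMk ((hY2limm.comp measurable_fst).prodMk (hZm.comp measurable_fst))
  set μs : ℕ → Measure (ℝ × ℝ × ℝ) := fun n => P.map (fun ω => (Y1 n ω, Y2 n ω, Z ω)) with hμs
  set μ : Measure (ℝ × ℝ × ℝ) := (P.prod P').map (fun ωp => (Ybar ωp, Y2lim ωp.1, Z ωp.1)) with hμ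
  haveI : ∀ n, IsProbabilityMeasure (μs n) := fun n =>
    Measure.isProbabilityMeasure_map (hXn n).aemeasurable
  haveI : IsProbabilityMeasure μ := Measure.isProbabilityMeasure_map hXbar.aemeasurable
  have hmapn : ∀ (n : ℕ) (h : ℝ × ℝ × ℝ → ℝ), AEStronglyMeasurable h (μs n) →
      ∫ x, h x ∂(μs n) = ∫ ω, h (Y1 n ω, Y2 n ω, Z ω) ∂P := fun n h hh =>
    integral_map (hXn n).aemeasurable hh
  have hmapbar : ∀ (h : ℝ × ℝ × ℝ → ℝ), AEStronglyMeasurable h μ →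
      ∫ x, h x ∂μ = ∫ ωp, h (Ybar ωp, Y2lim ωp.1, Z ωp.1) ∂(P.prod P') := fun h hh =>
    integral_map hXbar.aemeasurable hh
  have keymap : ∀ (φ : ℝ × ℝ × ℝ → ℝ) (L B : ℝ), 0 ≤ L → 0 ≤ B →
      (∀ x y, |φ x - φ y| ≤ L * dist x y) → (∀ x, |φ x| ≤ B) →
      Tendsto (fun n => ∫ x, φ x ∂(μs n)) atTop (𝓝 (∫ x, φ x ∂μ)) := by
    intro φ L B hL hB h1 h2
    have hφc : Continuous φ := aux_cont_of_lip h1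
    have e1 : (fun n => ∫ x, φ x ∂(μs n)) = fun n => ∫ ω, φ (Y1 n ω, Y2 n ω, Z ω) ∂P := by
      funext n; exact hmapn n φ hφc.aestronglyMeasurable
    have e2 : ∫ x, φ x ∂μ = ∫ ωp, φ (Ybar ωp, Y2lim ωp.1, Z ωp.1) ∂(P.prod P') :=
      hmapbar φ hφc.aestronglyMeasurable
    rw [e1, e2]
    exact KeyLip φ L B hL hB h1 h2
  have liminf_cond : ∀ h : BoundedContinuousFunction (ℝ × ℝ × ℝ) ℝ, 0 ≤ h →
      ∫ x, h x ∂μ ≤ atTop.liminf (fun n => ∫ x, h x ∂(μs n)) := by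
    intro h hh
    have hb : ∀ x, |h x| ≤ ‖h‖ := fun x => by
      rw [← Real.norm_eq_abs]; exact h.norm_coe_le_norm x
    have hhx : ∀ x, (0:ℝ) ≤ h x := fun x => by simpa using hh x
    have hMYb : ∀ (m : ℕ) (x : ℝ × ℝ × ℝ), |auxMY h m x| ≤ ‖h‖ := by
      intro m x
      rw [abs_of_nonneg (auxMY_nonneg h hh m x)]
      exact le_trans (auxMY_le h hh m x) (le_trans (le_abs_self _) (hb x))
    have hint_m : ∀ m : ℕ, Tendsto (fun n => ∫ x, auxMY h m x ∂(μs n)) atTop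
        (𝓝 (∫ x, auxMY h m x ∂μ)) := fun m =>
      keymap _ m ‖h‖ (by positivity) (norm_nonneg h) (auxMY_lip h hh m) (hMYb m)
    have hle_n : ∀ (m : ℕ) (n : ℕ), ∫ x, auxMY h m x ∂(μs n) ≤ ∫ x, h x ∂(μs n) := by
      intro m n
      apply integral_mono
      · exact aux_integrable_of_bounded
          (aux_cont_of_lip (auxMY_lip h hh m)).aestronglyMeasurable (hMYb m)
      · exact h.integrable _
      · exact fun x => auxMY_le h hh m x
    have hbddb : IsBoundedUnder (· ≥ ·) atTop (fun n => ∫ x, h x ∂(μs n)) := by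
      refine ⟨0, eventually_map.mpr (Eventually.of_forall fun n => ?_)⟩
      exact integral_nonneg hhx
    have hstep : ∀ m : ℕ, ∫ x, auxMY h m x ∂μ ≤ atTop.liminf (fun n => ∫ x, h x ∂(μs n)) := by
      intro m
      have h1 : atTop.liminf (fun n => ∫ x, auxMY h m x ∂(μs n)) = ∫ x, auxMY h m x ∂μ :=
        (hint_m m).liminf_eq
      rw [← h1]
      have hbdda : IsBoundedUnder (· ≤ ·) atTop (fun n => ∫ x, h x ∂(μs n)) := by
        refine ⟨‖h‖, eventually_map.mpr (Eventually.of_forall fun n => ?_)⟩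
        calc ∫ x, h x ∂(μs n) ≤ ∫ _x, ‖h‖ ∂(μs n) :=
            integral_mono (h.integrable _) (integrable_const _)
              (fun x => (le_abs_self _).trans (hb x))
          _ = ‖h‖ := by simp
      exact liminf_le_liminf (Eventually.of_forall (hle_n m))
        (hint_m m).isBoundedUnder_ge hbdda.isCoboundedUnder_ge
    have hMCT : Tendsto (fun m : ℕ => ∫ x, auxMY h m x ∂μ) atTop (𝓝 (∫ x, h x ∂μ)) := by
      apply integral_tendsto_of_tendsto_of_monotone
      · exact fun m => aux_integrable_of_bounded
          (aux_cont_of_lip (auxMY_lip h hh m)).aestronglyMeasurable (hMYb m)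
      · exact h.integrable μ
      · exact Eventually.of_forall fun x => auxMY_mono h hh x
      · exact Eventually.of_forall fun x => auxMY_tendsto h hh x
    exact le_of_tendsto hMCT (Eventually.of_forall hstep)
  have final := tendsto_integral_of_forall_integral_le_liminf_integral liminf_cond g
  have e1 : (fun n => ∫ x, g x ∂(μs n)) = fun n => ∫ ω, g (Y1 n ω, Y2 n ω, Z ω) ∂P := by
    funext n; exact hmapn n g g.continuous.aestronglyMeasurable
  have e2 : ∫ x, g x ∂μ = ∫ ωp, g (Ybar ωp, Y2lim ωp.1, Z ωp.1) ∂(P.prod P') :=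
    hmapbar g g.continuous.aestronglyMeasurable
  rw [e1, e2] at final
  exact final

end StableAux

open PV in
/-- Joint stable convergence: if `(Y¹ₙ, Z)` converges in distribution to
`(Y¹, Z)` for every bounded `ℱ^Y`-measurable `Z` (with `ℱ^Y` the σ-field generated by all
the `Y⁽ⁱ⁾ₙ`), and `Y²ₙ → Y²` in probability with `Y²` being `ℱ^Y`-measurable, then
`(Y¹ₙ, Y²ₙ, Z)` converges in distribution to `(Y¹, Y², Z)`; in particular
`(Y¹ₙ + Y²ₙ, Z)` converges in distribution to `(Y¹ + Y², Z)`. -/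
theorem stmt1 {Ω Ω' : Type*} [MeasurableSpace Ω] [MeasurableSpace Ω']
    (P : Measure Ω) (P' : Measure Ω')
    [IsProbabilityMeasure P] [IsProbabilityMeasure P']
    (Y1 Y2 : ℕ → Ω → ℝ)
    (hY1meas : ∀ n, Measurable (Y1 n)) (hY2meas : ∀ n, Measurable (Y2 n))
    (Ybar : Ω × Ω' → ℝ) (hYbar : Measurable Ybar)
    (Y2lim : Ω → ℝ)
    (hY2lim : Measurable[⨆ n : ℕ,
      MeasurableSpace.comap (Y1 n) inferInstance ⊔ MeasurableSpace.comap (Y2 n) inferInstance]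
      Y2lim)
    (hconv1 : ∀ Z : Ω → ℝ,
      Measurable[⨆ n : ℕ, MeasurableSpace.comap (Y1 n) inferInstance ⊔
        MeasurableSpace.comap (Y2 n) inferInstance] Z →
      (∃ C : ℝ, ∀ ω, |Z ω| ≤ C) →
      ∀ g : BoundedContinuousFunction (ℝ × ℝ) ℝ,
        Tendsto (fun n => ∫ ω, g (Y1 n ω, Z ω) ∂P) atTop
          (𝓝 (∫ ωp, g (Ybar ωp, Z ωp.1) ∂(P.prod P'))))
    (hconv2 : TendstoInMeasure P Y2 atTop Y2lim) :
    ∀ Z : Ω → ℝ,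
      Measurable[⨆ n : ℕ, MeasurableSpace.comap (Y1 n) inferInstance ⊔
        MeasurableSpace.comap (Y2 n) inferInstance] Z →
      (∃ C : ℝ, ∀ ω, |Z ω| ≤ C) →
      (∀ g : BoundedContinuousFunction (ℝ × ℝ × ℝ) ℝ,
        Tendsto (fun n => ∫ ω, g (Y1 n ω, Y2 n ω, Z ω) ∂P) atTop
          (𝓝 (∫ ωp, g (Ybar ωp, Y2lim ωp.1, Z ωp.1) ∂(P.prod P')))) ∧
      (∀ g : BoundedContinuousFunction (ℝ × ℝ) ℝ,
        Tendsto (fun n => ∫ ω, g (Y1 n ω + Y2 n ω, Z ω) ∂P) atTop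
          (𝓝 (∫ ωp, g (Ybar ωp + Y2lim ωp.1, Z ωp.1) ∂(P.prod P')))) := by
  
  intro Z hZmeas hZbd
  obtain ⟨C, hC⟩ := hZbd
  have main := aux_main P P' Y1 Y2 hY1meas hY2meas Ybar hYbar Y2lim hY2lim hconv1 hconv2
    Z hZmeas C hC
  refine ⟨main, ?_⟩
  intro g
  have hφ : Continuous fun p : ℝ × ℝ × ℝ => (p.1 + p.2.1, p.2.2) :=
    (continuous_fst.add (continuous_fst.comp continuous_snd)).prodMk
      (continuous_snd.comp continuous_snd)
  exact main (g.compContinuous ⟨fun p : ℝ × ℝ × ℝ => (p.1 + p.2.1, p.2.2), hφ⟩)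
end
end

section
/- Let x be a fractional Brownian motion with Hurst parameter H < 1/2 and let t_k = k/n be the uniform partition of [0,1]. Define, for partition points s ≤ t, h^n_{st} = Σ_{s ≤ t_k < t} ∫_{t_k}^{t_{k+1}} (x_u − x_{t_k}) du. Then there is a constant K independent of n such that E[|h^n_{st}|²] ≤ K n^{−2H−1} (t − s) for all partition points 0 ≤ s ≤ t ≤ 1. -/
/-!
Write `h^n_{st} = ∑ A_k` with `A_k = ∫_{t_k}^{t_{k+1}} (x_u - x_{t_k}) du`. By Fubini, `E[A_k A_l]`
is the integral over the two cells of the covariance of the increments `x_u - x_{t_k}` and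
`x_v - x_{t_l}`, and by polarization this covariance is a mixed second difference of `r ↦ r^{2H}`.
For neighbouring cells it is at most `n^{-2H}`, since `|XY| ≤ (X² + Y²) / 2`; for cells `m ≥ 2`
apart the second derivative of `r^{2H}` bounds it by `n^{-2H} (m - 1)^{2H - 2}`. So
`|E[A_k A_l]| ≤ n^{-2H-2} w(|k - l|)` with `w` summable because `2H - 2 < -1`, and summing over
the `n (t - s)` rows gives `E[(h^n_{st})²] ≤ 2 (∑ w) n^{-2H-1} (t - s)`.
-/

open MeasureTheory ProbabilityTheory Real Filter
open scoped BigOperators NNReal ENNReal Topology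

noncomputable section

open Set

lemma abs_rpow_sub_rpow_le_of_le_one {q c d : ℝ} (hq : q ≤ 1) (hc : 0 < c) (hcd : c ≤ d) :
    |d ^ q - c ^ q| ≤ |q| * c ^ (q - 1) * (d - c) := by
  have h := norm_image_sub_le_of_norm_deriv_le_segment'
    (f := fun z : ℝ => z ^ q) (f' := fun z => q * z ^ (q - 1)) (C := |q| * c ^ (q - 1))
    (fun z hz => (Real.hasDerivAt_rpow_const
      (Or.inl (hc.trans_le hz.1).ne')).hasDerivWithinAt)
    (fun z hz => by
      rw [Real.norm_eq_abs, abs_mul, abs_of_pos (Real.rpow_pos_of_pos (hc.trans_le hz.1) _)]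
      exact mul_le_mul_of_nonneg_left
        (Real.rpow_le_rpow_of_nonpos hc hz.1 (by linarith)) (abs_nonneg q))
    d (right_mem_Icc.2 hcd)
  simpa only [Real.norm_eq_abs] using h

lemma abs_rpow_mixed_diff_le {q δ η b₁ b₂ : ℝ} (hq0 : 0 ≤ q) (hq1 : q ≤ 1)
    (hδ0 : 0 ≤ δ) (hδη : δ ≤ η) (hb₁ : 0 < b₁) (hb : b₁ ≤ b₂) (hb₂ : b₂ - b₁ ≤ η) :
    |((b₂ + δ) ^ q - b₂ ^ q) - ((b₁ + δ) ^ q - b₁ ^ q)| ≤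
      q * (1 - q) * η ^ 2 * b₁ ^ (q - 2) := by
  have hq1' : 0 ≤ 1 - q := by linarith
  have hderiv_le : ∀ z ∈ Icc b₁ b₂,
      ‖q * (z + δ) ^ (q - 1) - q * z ^ (q - 1)‖ ≤ q * (1 - q) * η * b₁ ^ (q - 2) := by
    intro z hz
    have hdiff := abs_rpow_sub_rpow_le_of_le_one (q := q - 1) (by linarith)
      (hb₁.trans_le hz.1) (le_add_of_nonneg_right hδ0)
    rw [abs_of_nonpos (by linarith : q - 1 ≤ 0), show q - 1 - 1 = q - 2 by ring,
      add_sub_cancel_left, neg_sub] at hdiff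
    have hzb : z ^ (q - 2) ≤ b₁ ^ (q - 2) := Real.rpow_le_rpow_of_nonpos hb₁ hz.1 (by linarith)
    rw [Real.norm_eq_abs, ← mul_sub, abs_mul, abs_of_nonneg hq0]
    calc q * |(z + δ) ^ (q - 1) - z ^ (q - 1)| ≤ q * ((1 - q) * z ^ (q - 2) * δ) := by gcongr
      _ ≤ q * ((1 - q) * b₁ ^ (q - 2) * η) := by gcongr
      _ = q * (1 - q) * η * b₁ ^ (q - 2) := by ring
  have h := norm_image_sub_le_of_norm_deriv_le_segment' (f := fun b : ℝ => (b + δ) ^ q - b ^ q)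
    (fun z hz => ((((hasDerivAt_id z).add_const δ).rpow_const
      (Or.inl (by simp only [id]; linarith [hb₁.trans_le hz.1]))).sub
      (Real.hasDerivAt_rpow_const (Or.inl (hb₁.trans_le hz.1).ne'))).hasDerivWithinAt)
    (fun z hz => by simpa only [id, one_mul] using hderiv_le z (Ico_subset_Icc_self hz))
    b₂ (right_mem_Icc.2 hb)
  rw [Real.norm_eq_abs] at h
  have hη : 0 ≤ η := hδ0.trans hδη
  calc _ ≤ q * (1 - q) * η * b₁ ^ (q - 2) * (b₂ - b₁) := h
    _ ≤ q * (1 - q) * η * b₁ ^ (q - 2) * η := by gcongr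
    _ = q * (1 - q) * η ^ 2 * b₁ ^ (q - 2) := by ring

lemma abs_rpow_four_point_le {q a u b v η g : ℝ} (hq0 : 0 ≤ q) (hq1 : q ≤ 1)
    (hau : a ≤ u) (hua : u ≤ a + η) (hg : 0 < g) (hub : u + g ≤ b) (hbv : b ≤ v)
    (hvb : v ≤ b + η) :
    |(|u - b| ^ q + |v - a| ^ q - |u - v| ^ q - |a - b| ^ q) / 2| ≤
      q * (1 - q) / 2 * η ^ 2 * g ^ (q - 2) := by
  have hmixed := abs_rpow_mixed_diff_le (η := η) (δ := u - a) (b₁ := b - u) (b₂ := v - u)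
    hq0 hq1 (by linarith) (by linarith) (by linarith) (by linarith) (by linarith)
  have hexpr : |u - b| ^ q + |v - a| ^ q - |u - v| ^ q - |a - b| ^ q =
      ((v - u + (u - a)) ^ q - (v - u) ^ q) - ((b - u + (u - a)) ^ q - (b - u) ^ q) := by
    rw [abs_of_nonpos (by linarith : u - b ≤ 0), abs_of_nonneg (by linarith : 0 ≤ v - a),
      abs_of_nonpos (by linarith : u - v ≤ 0), abs_of_nonpos (by linarith : a - b ≤ 0)]
    ring_nf
  have hmono : (b - u) ^ (q - 2) ≤ g ^ (q - 2) :=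
    Real.rpow_le_rpow_of_nonpos hg (by linarith) (by linarith)
  have hq : 0 ≤ q * (1 - q) * η ^ 2 := mul_nonneg (mul_nonneg hq0 (by linarith)) (sq_nonneg η)
  rw [hexpr, abs_div, abs_two]
  calc _ ≤ q * (1 - q) * η ^ 2 * (b - u) ^ (q - 2) / 2 := by gcongr
    _ ≤ q * (1 - q) * η ^ 2 * g ^ (q - 2) / 2 := by gcongr
    _ = q * (1 - q) / 2 * η ^ 2 * g ^ (q - 2) := by ring

lemma sum_weight_dist_le {w : ℕ → ℝ} (hw0 : ∀ m, 0 ≤ w m) (hw : Summable w) (k : ℕ)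
    (s : Finset ℕ) : ∑ l ∈ s, w (Nat.dist k l) ≤ 2 * ∑' m, w m := by
  have hinj : ∀ (t : Finset ℕ) (g : ℕ → ℕ), Set.InjOn g t → ∑ l ∈ t, w (g l) ≤ ∑' m, w m :=
    fun t g hg => by
      rw [← Finset.sum_image hg]
      exact hw.sum_le_tsum _ fun m _ => hw0 m
  rw [← Finset.sum_filter_add_sum_filter_not s (· ≤ k), two_mul]
  gcongr
  · rw [Finset.sum_congr rfl fun l hl => by
      rw [Nat.dist_comm, Nat.dist_eq_sub_of_le (Finset.mem_filter.1 hl).2]]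
    exact hinj _ _ fun a ha b hb hab => by
      simp only [Finset.coe_filter, Set.mem_ofPred_eq] at ha hb hab; omega
  · rw [Finset.sum_congr rfl fun l hl => by
      rw [Nat.dist_eq_sub_of_le (le_of_not_ge (Finset.mem_filter.1 hl).2)]]
    exact hinj _ _ fun a ha b hb hab => by
      simp only [Finset.coe_filter, Set.mem_ofPred_eq] at ha hb hab; omega

lemma sum_sum_le_of_abs_le_weight_dist {a : ℕ → ℕ → ℝ} {w : ℕ → ℝ} (hw0 : ∀ m, 0 ≤ w m)
    (hw : Summable w) (s : Finset ℕ) (ha : ∀ k ∈ s, ∀ l ∈ s, |a k l| ≤ w (Nat.dist k l)) :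
    ∑ k ∈ s, ∑ l ∈ s, a k l ≤ s.card * (2 * ∑' m, w m) := by
  rw [← nsmul_eq_mul, ← Finset.sum_const]
  refine Finset.sum_le_sum fun k hk => ?_
  calc ∑ l ∈ s, a k l ≤ ∑ l ∈ s, w (Nat.dist k l) :=
        Finset.sum_le_sum fun l hl => (le_abs_self _).trans (ha k hk l hl)
    _ ≤ 2 * ∑' m, w m := sum_weight_dist_le hw0 hw k s

lemma integral_sq_gaussianReal_zero (v : ℝ≥0) : ∫ y, y ^ 2 ∂gaussianReal 0 v = v :=
  (variance_of_integral_eq_zero aemeasurable_id integral_id_gaussianReal).symm.trans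
    variance_id_gaussianReal

section Integrals

variable {Ω : Type*} [MeasurableSpace Ω] {P : Measure Ω}

lemma integral_abs_mul_le_of_memLp_two {f g : Ω → ℝ} (hf : MemLp f 2 P) (hg : MemLp g 2 P) :
    ∫ ω, |f ω * g ω| ∂P ≤ (∫ ω, f ω ^ 2 ∂P + ∫ ω, g ω ^ 2 ∂P) / 2 := by
  rw [← integral_add hf.integrable_sq hg.integrable_sq, ← integral_div]
  refine integral_mono (hf.integrable_mul hg).abs
    ((hf.integrable_sq.add hg.integrable_sq).div_const 2) fun ω => ?_
  rw [abs_mul]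
  nlinarith [two_mul_le_add_sq |f ω| |g ω|, sq_abs (f ω), sq_abs (g ω)]

lemma integrable_sq_sum_and_integral_eq {ι : Type*} (s : Finset ι) {A : ι → Ω → ℝ}
    (h : ∀ k ∈ s, ∀ l ∈ s, Integrable (fun ω => A k ω * A l ω) P) :
    Integrable (fun ω => (∑ k ∈ s, A k ω) ^ 2) P ∧
      ∫ ω, (∑ k ∈ s, A k ω) ^ 2 ∂P = ∑ k ∈ s, ∑ l ∈ s, ∫ ω, A k ω * A l ω ∂P := by
  simp_rw [sq, Finset.sum_mul_sum]
  have hrow : ∀ k ∈ s, Integrable (fun ω => ∑ l ∈ s, A k ω * A l ω) P :=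
    fun k hk => integrable_finsetSum _ (h k hk)
  refine ⟨integrable_finsetSum _ hrow, ?_⟩
  rw [integral_finsetSum _ hrow]
  exact Finset.sum_congr rfl fun k hk => integral_finsetSum _ (h k hk)

lemma integrable_mul_intervalIntegral_and_abs_integral_le [SFinite P] {X Y : ℝ → Ω → ℝ}
    (hX : Measurable (Function.uncurry X)) (hY : Measurable (Function.uncurry Y))
    {a b c d C B : ℝ} (hab : a ≤ b) (hcd : c ≤ d)
    (hX2 : ∀ u ∈ Ioc a b, MemLp (X u) 2 P) (hY2 : ∀ v ∈ Ioc c d, MemLp (Y v) 2 P)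
    (hXC : ∀ u ∈ Ioc a b, ∫ ω, X u ω ^ 2 ∂P ≤ C) (hYC : ∀ v ∈ Ioc c d, ∫ ω, Y v ω ^ 2 ∂P ≤ C)
    (hB : ∀ u ∈ Ioc a b, ∀ v ∈ Ioc c d, |∫ ω, X u ω * Y v ω ∂P| ≤ B) :
    Integrable (fun ω => (∫ u in a..b, X u ω) * ∫ v in c..d, Y v ω) P ∧
      |∫ ω, (∫ u in a..b, X u ω) * (∫ v in c..d, Y v ω) ∂P| ≤ B * ((b - a) * (d - c)) := by
  set μ : Measure (ℝ × ℝ) := (volume.restrict (Ioc a b)).prod (volume.restrict (Ioc c d))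
    with hμdef
  set F : (ℝ × ℝ) × Ω → ℝ := fun q => X q.1.1 q.2 * Y q.1.2 q.2
  have hF : Measurable F := (hX.comp (measurable_fst.fst.prodMk measurable_snd)).mul
    (hY.comp (measurable_fst.snd.prodMk measurable_snd))
  have hbox : ∀ᵐ z ∂μ, z ∈ Ioc a b ×ˢ Ioc c d := by
    rw [hμdef, Measure.prod_restrict]
    exact ae_restrict_mem (measurableSet_Ioc.prod measurableSet_Ioc)
  have hFint : Integrable F (μ.prod P) := by
    rw [integrable_prod_iff hF.aestronglyMeasurable]
    refine ⟨hbox.mono fun z hz => (hX2 _ hz.1).integrable_mul (hY2 _ hz.2),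
      Integrable.of_bound hF.norm.stronglyMeasurable.integral_prod_right'.aestronglyMeasurable C
        (hbox.mono fun z hz => ?_)⟩
    rw [Real.norm_of_nonneg (integral_nonneg fun _ => norm_nonneg _)]
    have h := integral_abs_mul_le_of_memLp_two (hX2 _ hz.1) (hY2 _ hz.2)
    simp only [F, Real.norm_eq_abs]
    linarith [hXC _ hz.1, hYC _ hz.2]
  have hprod : ∀ ω, (∫ u in a..b, X u ω) * (∫ v in c..d, Y v ω) = ∫ z, F (z, ω) ∂μ :=
    fun ω => by
      rw [intervalIntegral.integral_of_le hab, intervalIntegral.integral_of_le hcd,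
        ← integral_prod_mul]
  simp_rw [hprod]
  refine ⟨hFint.integral_prod_right, ?_⟩
  rw [← integral_integral_swap (f := fun z ω => F (z, ω)) hFint]
  have hμ : μ.real univ = (b - a) * (d - c) := by
    rw [measureReal_def, ← univ_prod_univ, Measure.prod_prod, Measure.restrict_apply_univ,
      Measure.restrict_apply_univ, Real.volume_Ioc, Real.volume_Ioc, ENNReal.toReal_mul,
      ENNReal.toReal_ofReal (by linarith), ENNReal.toReal_ofReal (by linarith)]
  rw [← hμ]
  exact norm_integral_le_of_norm_le_const (f := fun z => ∫ ω, F (z, ω) ∂P)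
    (hbox.mono fun z hz => hB _ hz.1 _ hz.2)

end Integrals

namespace PV

section Cells

variable {Ω : Type*} {x : ℝ → Ω → ℝ}

def cellInt (x : ℝ → Ω → ℝ) (n k : ℕ) (ω : Ω) : ℝ :=
  ∫ u in ((k : ℝ) / n)..(((k : ℝ) + 1) / n), (x u ω - x ((k : ℝ) / n) ω)

lemma hnInt_eq_sum_cellInt {n j j' : ℕ} (hn : 0 < n) (hj' : j' ≤ n) (ω : Ω) :
    hnInt x n ((j : ℝ) / n) ((j' : ℝ) / n) ω = ∑ k ∈ Finset.Ico j j', cellInt x n k ω := by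
  have hN : (0 : ℝ) < n := Nat.cast_pos.2 hn
  simp only [hnInt, div_le_div_iff_of_pos_right hN, div_lt_div_iff_of_pos_right hN,
    Nat.cast_le, Nat.cast_lt]
  rw [← Finset.sum_filter]
  congr 1
  ext k
  simp only [Finset.mem_filter, Finset.mem_range, Finset.mem_Ico]
  omega

lemma cell_subset_Icc {n k : ℕ} (hk : k < n) :
    Icc ((k : ℝ) / n) (((k : ℝ) + 1) / n) ⊆ Icc 0 1 := by
  have hN : (0 : ℝ) < n := Nat.cast_pos.2 (by omega)
  refine Icc_subset_Icc (by positivity) ((div_le_one hN).2 ?_)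
  exact_mod_cast hk

end Cells

-- Bounds the covariance of the increments over cells `m` apart, in units of `n ^ (-q)`:
-- neighbouring cells are bounded by the variances, distant ones by the decay of `r ↦ r ^ (q - 2)`.
def gapWeight (q : ℝ) (m : ℕ) : ℝ := if m ≤ 1 then 1 else ((m - 1 : ℕ) : ℝ) ^ (q - 2)

lemma gapWeight_nonneg (q : ℝ) (m : ℕ) : 0 ≤ gapWeight q m := by
  unfold gapWeight; split_ifs <;> positivity

lemma summable_gapWeight {q : ℝ} (hq : q < 1) : Summable (gapWeight q) := by
  refine (summable_nat_add_iff 2).1 ?_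
  have h := (summable_nat_add_iff 1).2 (Real.summable_nat_rpow.2 (by linarith : q - 2 < -1))
  refine h.congr fun m => ?_
  simp only [gapWeight, if_neg (by omega : ¬ m + 2 ≤ 1)]
  push_cast; ring_nf

namespace IsFBM

variable {Ω : Type*} [MeasurableSpace Ω] {P : Measure Ω} {H : ℝ} {x : ℝ → Ω → ℝ}

lemma map_sub (hx : IsFBM P H x) (hH0 : 0 < H) {s t : ℝ} (hs : s ∈ Icc (0 : ℝ) 1)
    (ht : t ∈ Icc (0 : ℝ) 1) :
    P.map (fun ω => x t ω - x s ω) = gaussianReal 0 (|t - s| ^ (2 * H)).toNNReal := by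
  have h := hx.gaussian 2 ![t, s] ![1, -1] (by intro i; fin_cases i <;> assumption)
  have hzero : (0 : ℝ) ^ (2 * H) = 0 := Real.zero_rpow (by positivity)
  simp only [Fin.sum_univ_two, Matrix.cons_val_zero, Matrix.cons_val_one] at h
  convert h using 3
  · ring
  · simp only [fbmCov, sub_self, abs_zero, hzero, abs_sub_comm s t]
    ring

lemma memLp_sub (hx : IsFBM P H x) (hH0 : 0 < H) {s t : ℝ} (hs : s ∈ Icc (0 : ℝ) 1)
    (ht : t ∈ Icc (0 : ℝ) 1) : MemLp (fun ω => x t ω - x s ω) 2 P := by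
  have h := memLp_id_gaussianReal' (μ := 0) (v := (|t - s| ^ (2 * H)).toNNReal) 2 (by simp)
  have hm : Measurable fun ω => x t ω - x s ω := (hx.meas t).sub (hx.meas s)
  rw [← hx.map_sub hH0 hs ht, memLp_map_measure_iff aestronglyMeasurable_id hm.aemeasurable] at h
  exact h

lemma integral_sub_sq (hx : IsFBM P H x) (hH0 : 0 < H) {s t : ℝ} (hs : s ∈ Icc (0 : ℝ) 1)
    (ht : t ∈ Icc (0 : ℝ) 1) : ∫ ω, (x t ω - x s ω) ^ 2 ∂P = |t - s| ^ (2 * H) := by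
  have hm : Measurable fun ω => x t ω - x s ω := (hx.meas t).sub (hx.meas s)
  have h := integral_map (μ := P) (f := fun y : ℝ => y ^ 2) hm.aemeasurable
    (measurable_id.pow_const 2).aestronglyMeasurable
  rw [hx.map_sub hH0 hs ht, integral_sq_gaussianReal_zero,
    Real.coe_toNNReal _ (by positivity)] at h
  exact h.symm

-- Polarization:
-- `2 (x_u - x_a)(x_v - x_b) = (x_u - x_b)² + (x_v - x_a)² - (x_u - x_v)² - (x_a - x_b)²`.
lemma integral_sub_mul_sub (hx : IsFBM P H x) (hH0 : 0 < H) {a u b v : ℝ}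
    (ha : a ∈ Icc (0 : ℝ) 1) (hu : u ∈ Icc (0 : ℝ) 1) (hb : b ∈ Icc (0 : ℝ) 1)
    (hv : v ∈ Icc (0 : ℝ) 1) :
    ∫ ω, (x u ω - x a ω) * (x v ω - x b ω) ∂P =
      (|u - b| ^ (2 * H) + |v - a| ^ (2 * H) - |u - v| ^ (2 * H) - |a - b| ^ (2 * H)) / 2 := by
  have hsq : ∀ {s t : ℝ}, s ∈ Icc (0 : ℝ) 1 → t ∈ Icc (0 : ℝ) 1 →
      Integrable (fun ω => (x t ω - x s ω) ^ 2) P :=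
    fun hs ht => (hx.memLp_sub hH0 hs ht).integrable_sq
  have hpol : (fun ω => (x u ω - x a ω) * (x v ω - x b ω)) = fun ω =>
      ((x u ω - x b ω) ^ 2 + (x v ω - x a ω) ^ 2 - (x u ω - x v ω) ^ 2 -
        (x a ω - x b ω) ^ 2) / 2 := by
    funext ω; ring
  rw [hpol, integral_div,
    integral_sub (by exact ((hsq hb hu).add (hsq ha hv)).sub (hsq hv hu)) (hsq hb ha),
    integral_sub (by exact (hsq hb hu).add (hsq ha hv)) (hsq hv hu),
    integral_add (hsq hb hu) (hsq ha hv), hx.integral_sub_sq hH0 hb hu,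
    hx.integral_sub_sq hH0 ha hv, hx.integral_sub_sq hH0 hv hu, hx.integral_sub_sq hH0 hb ha]

lemma abs_integral_sub_mul_sub_le_of_near (hx : IsFBM P H x) (hH0 : 0 < H) {a u b v η : ℝ}
    (ha : a ∈ Icc (0 : ℝ) 1) (hu : u ∈ Icc (0 : ℝ) 1) (hb : b ∈ Icc (0 : ℝ) 1)
    (hv : v ∈ Icc (0 : ℝ) 1) (hau : a ≤ u) (hua : u ≤ a + η) (hbv : b ≤ v) (hvb : v ≤ b + η) :
    |∫ ω, (x u ω - x a ω) * (x v ω - x b ω) ∂P| ≤ η ^ (2 * H) := by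
  have hle : ∀ {s t : ℝ}, s ≤ t → t ≤ s + η → |t - s| ^ (2 * H) ≤ η ^ (2 * H) :=
    fun hst hts => Real.rpow_le_rpow (abs_nonneg _)
      (by rw [abs_of_nonneg (sub_nonneg.2 hst)]; linarith) (by positivity)
  have h := abs_integral_le_integral_abs.trans
    (integral_abs_mul_le_of_memLp_two (hx.memLp_sub hH0 ha hu) (hx.memLp_sub hH0 hb hv))
  rw [hx.integral_sub_sq hH0 ha hu, hx.integral_sub_sq hH0 hb hv] at h
  linarith [hle hau hua, hle hbv hvb]

lemma abs_integral_sub_mul_sub_le_of_far (hx : IsFBM P H x) (hH0 : 0 < H) (hH : H ≤ 1 / 2)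
    {a u b v η g : ℝ} (ha : a ∈ Icc (0 : ℝ) 1) (hu : u ∈ Icc (0 : ℝ) 1)
    (hb : b ∈ Icc (0 : ℝ) 1) (hv : v ∈ Icc (0 : ℝ) 1) (hau : a ≤ u) (hua : u ≤ a + η)
    (hg : 0 < g) (hub : u + g ≤ b) (hbv : b ≤ v) (hvb : v ≤ b + η) :
    |∫ ω, (x u ω - x a ω) * (x v ω - x b ω) ∂P| ≤
      H * (1 - 2 * H) * η ^ 2 * g ^ (2 * H - 2) := by
  rw [hx.integral_sub_mul_sub hH0 ha hu hb hv]
  convert abs_rpow_four_point_le (q := 2 * H) (by linarith) (by linarith) hau hua hg hub hbv hvb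
    using 1
  ring

lemma abs_integral_cell_increments_le (hx : IsFBM P H x) (hH0 : 0 < H) (hH : H ≤ 1 / 2)
    {n k l : ℕ} (hkl : k ≤ l) (hl : l < n) {u v : ℝ}
    (hu : u ∈ Ioc ((k : ℝ) / n) (((k : ℝ) + 1) / n))
    (hv : v ∈ Ioc ((l : ℝ) / n) (((l : ℝ) + 1) / n)) :
    |∫ ω, (x u ω - x ((k : ℝ) / n) ω) * (x v ω - x ((l : ℝ) / n) ω) ∂P| ≤
      (n : ℝ) ^ (-(2 * H)) * gapWeight (2 * H) (l - k) := by
  have hk : k < n := by omega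
  have hN : (0 : ℝ) < n := Nat.cast_pos.2 (by omega)
  have hstep : ∀ m : ℕ, ((m : ℝ) + 1) / n = m / n + 1 / n := fun m => add_div _ _ _
  have hk01 := cell_subset_Icc hk ⟨le_rfl, by rw [hstep]; linarith [one_div_pos.2 hN]⟩
  have hl01 := cell_subset_Icc hl ⟨le_rfl, by rw [hstep]; linarith [one_div_pos.2 hN]⟩
  have hu01 := cell_subset_Icc hk (Ioc_subset_Icc_self hu)
  have hv01 := cell_subset_Icc hl (Ioc_subset_Icc_self hv)
  rw [hstep] at hu hv
  unfold gapWeight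
  split_ifs with hnear
  · rw [mul_one, Real.rpow_neg hN.le, ← Real.inv_rpow hN.le, ← one_div]
    exact hx.abs_integral_sub_mul_sub_le_of_near hH0 hk01 hu01 hl01 hv01 hu.1.le hu.2 hv.1.le hv.2
  · have hgap : ((l - k - 1 : ℕ) : ℝ) = l - (k + 1) := by
      rw [Nat.cast_sub (by omega), Nat.cast_sub (by omega)]; push_cast; ring
    have hkl' : (k : ℝ) + 1 < l := by exact_mod_cast (by omega : k + 1 < l)
    have hg : (0 : ℝ) < ((l - k - 1 : ℕ) : ℝ) / n := div_pos (by rw [hgap]; linarith) hN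
    have hfar := hx.abs_integral_sub_mul_sub_le_of_far hH0 hH hk01 hu01 hl01 hv01 hu.1.le hu.2
      hg (by rw [hgap, sub_div]; linarith [hstep k, hu.2]) hv.1.le hv.2
    have hpow : (1 / (n : ℝ)) ^ 2 * (((l - k - 1 : ℕ) : ℝ) / n) ^ (2 * H - 2) =
        (n : ℝ) ^ (-(2 * H)) * ((l - k - 1 : ℕ) : ℝ) ^ (2 * H - 2) := by
      rw [Real.div_rpow (Nat.cast_nonneg _) hN.le, Real.rpow_sub hN, Real.rpow_two,
        Real.rpow_neg hN.le]
      field_simp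
    have hH1 : H * (1 - 2 * H) ≤ 1 := by nlinarith
    calc _ ≤ H * (1 - 2 * H) * (1 / (n : ℝ)) ^ 2 * (((l - k - 1 : ℕ) : ℝ) / n) ^ (2 * H - 2) :=
          hfar
      _ ≤ (1 / (n : ℝ)) ^ 2 * (((l - k - 1 : ℕ) : ℝ) / n) ^ (2 * H - 2) := by
          rw [mul_assoc]
          exact mul_le_of_le_one_left (by positivity) hH1
      _ = _ := hpow

lemma measurable_uncurry_sub (hx : IsFBM P H x) (t : ℝ) :
    Measurable (Function.uncurry fun u ω => x (projIcc (0 : ℝ) 1 zero_le_one u) ω - x t ω) :=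
  measurable_uncurry_of_continuous_of_measurable
    (fun ω => ((hx.cont ω).comp_continuous (continuous_subtype_val.comp continuous_projIcc)
      fun u => (projIcc (0 : ℝ) 1 zero_le_one u).2).sub continuous_const)
    (fun _ => (hx.meas _).sub (hx.meas t))

-- Fubini needs a jointly measurable integrand, so the path is first extended to `ℝ` by
-- `projIcc`, which is continuous and changes nothing on the cells.
lemma integrable_cellInt_mul_and_abs_integral_le_of_le [SFinite P] (hx : IsFBM P H x)
    (hH0 : 0 < H) (hH : H ≤ 1 / 2) {n k l : ℕ} (hkl : k ≤ l) (hl : l < n) :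
    Integrable (fun ω => cellInt x n k ω * cellInt x n l ω) P ∧
      |∫ ω, cellInt x n k ω * cellInt x n l ω ∂P| ≤
        (n : ℝ) ^ (-(2 * H) - 2) * gapWeight (2 * H) (l - k) := by
  have hN : (0 : ℝ) < n := Nat.cast_pos.2 (by omega)
  have hk : k < n := by omega
  set X : ℕ → ℝ → Ω → ℝ :=
    fun m u ω => x (projIcc (0 : ℝ) 1 zero_le_one u) ω - x ((m : ℝ) / n) ω
  have hcell_le : ∀ m : ℕ, (m : ℝ) / n ≤ ((m : ℝ) + 1) / n := fun m => by gcongr; linarith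
  have hX : ∀ {m : ℕ}, m < n → ∀ u ∈ Icc ((m : ℝ) / n) (((m : ℝ) + 1) / n),
      X m u = fun ω => x u ω - x ((m : ℝ) / n) ω := fun hm u hu => by
    simp only [X, projIcc_of_mem _ (cell_subset_Icc hm hu)]
  have hcell : ∀ {m : ℕ}, m < n → ∀ ω,
      cellInt x n m ω = ∫ u in (m : ℝ) / n..((m : ℝ) + 1) / n, X m u ω :=
    fun hm ω => intervalIntegral.integral_congr fun u hu => by
      rw [uIcc_of_le (hcell_le _)] at hu
      simp only [hX hm u hu]
  have hmemLp : ∀ {m : ℕ}, m < n → ∀ u ∈ Ioc ((m : ℝ) / n) (((m : ℝ) + 1) / n),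
      MemLp (X m u) 2 P := fun hm u hu => by
    rw [hX hm u (Ioc_subset_Icc_self hu)]
    exact hx.memLp_sub hH0 (cell_subset_Icc hm ⟨le_rfl, hcell_le _⟩)
      (cell_subset_Icc hm (Ioc_subset_Icc_self hu))
  have hsq : ∀ {m : ℕ}, m < n → ∀ u ∈ Ioc ((m : ℝ) / n) (((m : ℝ) + 1) / n),
      ∫ ω, X m u ω ^ 2 ∂P ≤ 1 := fun hm u hu => by
    have hm01 := cell_subset_Icc hm ⟨le_rfl, hcell_le _⟩
    have hu01 := cell_subset_Icc hm (Ioc_subset_Icc_self hu)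
    rw [hX hm u (Ioc_subset_Icc_self hu), hx.integral_sub_sq hH0 hm01 hu01]
    exact Real.rpow_le_one (abs_nonneg _) (abs_le.2 ⟨by linarith [hm01.2, hu01.1],
      by linarith [hm01.1, hu01.2]⟩) (by positivity)
  have hcov : ∀ u ∈ Ioc ((k : ℝ) / n) (((k : ℝ) + 1) / n),
      ∀ v ∈ Ioc ((l : ℝ) / n) (((l : ℝ) + 1) / n),
        |∫ ω, X k u ω * X l v ω ∂P| ≤ (n : ℝ) ^ (-(2 * H)) * gapWeight (2 * H) (l - k) :=
    fun u hu v hv => by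
      rw [hX hk u (Ioc_subset_Icc_self hu), hX hl v (Ioc_subset_Icc_self hv)]
      exact hx.abs_integral_cell_increments_le hH0 hH hkl hl hu hv
  obtain ⟨hint, hbound⟩ := integrable_mul_intervalIntegral_and_abs_integral_le
    (hx.measurable_uncurry_sub _) (hx.measurable_uncurry_sub _) (hcell_le k) (hcell_le l)
    (hmemLp hk) (hmemLp hl) (hsq hk) (hsq hl) hcov
  simp_rw [hcell hk, hcell hl]
  refine ⟨hint, hbound.trans_eq ?_⟩
  have hlen : ∀ m : ℕ, ((m : ℝ) + 1) / n - m / n = (n : ℝ) ^ (-1 : ℝ) := fun m => by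
    rw [Real.rpow_neg_one]; field_simp; ring
  rw [hlen, hlen, ← Real.rpow_add hN, mul_right_comm, ← Real.rpow_add hN]
  congr 2
  ring

lemma integrable_cellInt_mul_and_abs_integral_le [SFinite P] (hx : IsFBM P H x) (hH0 : 0 < H)
    (hH : H ≤ 1 / 2) {n k l : ℕ} (hk : k < n) (hl : l < n) :
    Integrable (fun ω => cellInt x n k ω * cellInt x n l ω) P ∧
      |∫ ω, cellInt x n k ω * cellInt x n l ω ∂P| ≤
        (n : ℝ) ^ (-(2 * H) - 2) * gapWeight (2 * H) (Nat.dist k l) := by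
  rcases le_total k l with hkl | hlk
  · rw [Nat.dist_eq_sub_of_le hkl]
    exact hx.integrable_cellInt_mul_and_abs_integral_le_of_le hH0 hH hkl hl
  · rw [Nat.dist_comm, Nat.dist_eq_sub_of_le hlk]
    simp_rw [mul_comm (cellInt x n k _)]
    exact hx.integrable_cellInt_mul_and_abs_integral_le_of_le hH0 hH hlk hk

lemma integrable_sq_sum_cellInt_and_integral_le [SFinite P] (hx : IsFBM P H x) (hH0 : 0 < H)
    (hH : H < 1 / 2) {n : ℕ} {s : Finset ℕ} (hs : ∀ k ∈ s, k < n) :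
    Integrable (fun ω => (∑ k ∈ s, cellInt x n k ω) ^ 2) P ∧
      ∫ ω, (∑ k ∈ s, cellInt x n k ω) ^ 2 ∂P ≤
        s.card * (2 * ∑' m, (n : ℝ) ^ (-(2 * H) - 2) * gapWeight (2 * H) m) := by
  have hcells := fun k hk l hl =>
    hx.integrable_cellInt_mul_and_abs_integral_le hH0 hH.le (hs k hk) (hs l hl)
  obtain ⟨hint, heq⟩ := integrable_sq_sum_and_integral_eq s fun k hk l hl => (hcells k hk l hl).1
  refine ⟨hint, heq ▸ sum_sum_le_of_abs_le_weight_dist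
    (fun m => mul_nonneg (Real.rpow_nonneg (Nat.cast_nonneg n) _) (gapWeight_nonneg _ m))
    ((summable_gapWeight (by linarith)).mul_left _) s fun k hk l hl => (hcells k hk l hl).2⟩

end IsFBM

end PV

open PV in
/-- Second-moment bound `E[|h^n_{st}|²] ≤ K n^{-2H-1} (t-s)` for
`h^n_{st} = Σ_{s ≤ t_k < t} ∫_{t_k}^{t_{k+1}} (x_u - x_{t_k}) du` along the uniform
partition, where `s = j/n` and `t = j'/n` are partition points. -/
theorem stmt5 {Ω : Type*} [MeasurableSpace Ω] (P : Measure Ω) [IsProbabilityMeasure P]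
    (H : ℝ) (hH0 : 0 < H) (hH : H < 1 / 2)
    (x : ℝ → Ω → ℝ) (hx : IsFBM P H x) :
    ∃ K : ℝ, 0 < K ∧ ∀ n : ℕ, 1 ≤ n → ∀ j j' : ℕ, j ≤ j' → j' ≤ n →
      Integrable (fun ω => (hnInt x n ((j : ℝ) / n) ((j' : ℝ) / n) ω) ^ 2) P ∧
      ∫ ω, (hnInt x n ((j : ℝ) / n) ((j' : ℝ) / n) ω) ^ 2 ∂P ≤
        K * (n : ℝ) ^ (-(2 * H) - 1) * ((j' : ℝ) / n - (j : ℝ) / n) := by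
  set W := ∑' m, gapWeight (2 * H) m with hWdef
  have hW : 0 ≤ W := tsum_nonneg (gapWeight_nonneg _)
  refine ⟨2 * W + 1, by positivity, fun n hn j j' hjj' hj'n => ?_⟩
  have hN : (0 : ℝ) < n := Nat.cast_pos.2 (by omega)
  obtain ⟨hint, hle⟩ := hx.integrable_sq_sum_cellInt_and_integral_le hH0 hH (n := n)
    (s := Finset.Ico j j') fun k hk => by rw [Finset.mem_Ico] at hk; omega
  simp_rw [hnInt_eq_sum_cellInt (by omega : 0 < n) hj'n]
  refine ⟨hint, hle.trans ?_⟩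
  have hpow : (n : ℝ) ^ (-(2 * H) - 2) = (n : ℝ) ^ (-(2 * H) - 1) / n := by
    rw [show -(2 * H) - 2 = -(2 * H) - 1 - 1 by ring, Real.rpow_sub_one hN.ne']
  have hlen : (0 : ℝ) ≤ j' - j := sub_nonneg.2 (by exact_mod_cast hjj')
  have hN' : 0 ≤ (n : ℝ) ^ (-(2 * H) - 1) := Real.rpow_nonneg hN.le _
  calc _ = 2 * W * ((n : ℝ) ^ (-(2 * H) - 1) * (((j' : ℝ) - j) / n)) := by
        rw [tsum_mul_left, ← hWdef, Nat.card_Ico, Nat.cast_sub hjj', hpow]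
        ring
    _ ≤ (2 * W + 1) * ((n : ℝ) ^ (-(2 * H) - 1) * (((j' : ℝ) - j) / n)) :=
        mul_le_mul_of_nonneg_right (by linarith) (mul_nonneg hN' (div_nonneg hlen hN.le))
    _ = (2 * W + 1) * (n : ℝ) ^ (-(2 * H) - 1) * ((j' : ℝ) / n - (j : ℝ) / n) := by
        rw [sub_div]; ring
end
end
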